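/- arXiv:2510.07851 — 6 statements merged into one kernel-verified Lean document; each statement's English description precedes it below -/
import Mathlib

section
/- Affine normalization maps a reduction step to a complete reduction step: if M → N, and M_aff, N_aff are affine normal forms of M and N respectively, then M_aff ⇛ N_aff. -/
/-!
Affine reduction strictly decreases `Tm.weight` and all its critical pairs join, so by Newman's
lemma it is confluent and affine normal forms are unique. A reduction step is either affine, and
then `M` and `N` have the same affine normal form, or a parallel step `M ⇒ N`. Parallel
steps can be pushed through affine ones: if `M →aff M'` and `M ⇒ N`, then `M' →*aff M'' ⇒ N'`
with `N →*aff N'`. Iterating this along the normalization of `M` gives `M_aff ⇒ P` with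
`N →*aff P`, and `P` normalizes to `N_aff`.
-/

variable {Loc Ch : Type}

/-- FMC terms: variable, push `[N]a.M`, pop `a<x>.M` (de Bruijn binder),
choice `i`, case `M ; i -> N`, and loop `M^i`. -/
inductive Tm (Loc Ch : Type) : Type where
  | var : ℕ → Tm Loc Ch
  | push : Tm Loc Ch → Loc → Tm Loc Ch → Tm Loc Ch
  | pop : Loc → Tm Loc Ch → Tm Loc Ch
  | choice : Ch → Tm Loc Ch
  | caseOf : Tm Loc Ch → Ch → Tm Loc Ch → Tm Loc Ch
  | loop : Tm Loc Ch → Ch → Tm Loc Ch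

namespace Tm

/-- Shift the free de Bruijn indices `≥ d` up by one. -/
def lift : Tm Loc Ch → ℕ → Tm Loc Ch
  | var n, d => if n < d then var n else var (n + 1)
  | push N a M, d => push (N.lift d) a (M.lift d)
  | pop a M, d => pop a (M.lift (d + 1))
  | choice i, _ => choice i
  | caseOf M i N, d => caseOf (M.lift d) i (N.lift d)
  | loop M i, d => loop (M.lift d) i

/-- Capture-avoiding substitution `{N/k}M` for the de Bruijn index `k`. -/
def subst : Tm Loc Ch → ℕ → Tm Loc Ch → Tm Loc Ch
  | var n, k, N => if n = k then N else if n < k then var n else var (n - 1)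
  | push P a M, k, N => push (P.subst k N) a (M.subst k N)
  | pop a M, k, N => pop a (M.subst (k + 1) (N.lift 0))
  | choice i, _, _ => choice i
  | caseOf M i P, k, N => caseOf (M.subst k N) i (P.subst k N)
  | loop M i, k, N => loop (M.subst k N) i

end Tm

/-- Reduction: the closure under arbitrary contexts of the rules
beta, passage, select, reject, prefix(pop), prefix(push), associate, unroll. -/
inductive Step : Tm Loc Ch → Tm Loc Ch → Prop where
  | beta (N : Tm Loc Ch) (a : Loc) (M : Tm Loc Ch) :
      Step (.push N a (.pop a M)) (M.subst 0 N)
  | passage (N : Tm Loc Ch) (a b : Loc) (M : Tm Loc Ch) (h : a ≠ b) :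
      Step (.push N b (.pop a M)) (.pop a (.push (N.lift 0) b M))
  | select (i : Ch) (M : Tm Loc Ch) :
      Step (.caseOf (.choice i) i M) M
  | reject (i j : Ch) (M : Tm Loc Ch) (h : i ≠ j) :
      Step (.caseOf (.choice i) j M) (.choice i)
  | prefixPop (a : Loc) (N : Tm Loc Ch) (i : Ch) (M : Tm Loc Ch) :
      Step (.caseOf (.pop a N) i M) (.pop a (.caseOf N i (M.lift 0)))
  | prefixPush (P : Tm Loc Ch) (a : Loc) (N : Tm Loc Ch) (i : Ch) (M : Tm Loc Ch) :
      Step (.caseOf (.push P a N) i M) (.push P a (.caseOf N i M))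
  | assoc (P : Tm Loc Ch) (i : Ch) (N M : Tm Loc Ch) :
      Step (.caseOf (.caseOf P i N) i M) (.caseOf P i (.caseOf N i M))
  | unroll (M : Tm Loc Ch) (i : Ch) :
      Step (.loop M i) (.caseOf M i (.loop M i))
  | push_left (N N' : Tm Loc Ch) (a : Loc) (M : Tm Loc Ch) :
      Step N N' → Step (.push N a M) (.push N' a M)
  | push_right (N : Tm Loc Ch) (a : Loc) (M M' : Tm Loc Ch) :
      Step M M' → Step (.push N a M) (.push N a M')
  | pop_body (a : Loc) (M M' : Tm Loc Ch) :
      Step M M' → Step (.pop a M) (.pop a M')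
  | case_left (M M' : Tm Loc Ch) (i : Ch) (N : Tm Loc Ch) :
      Step M M' → Step (.caseOf M i N) (.caseOf M' i N)
  | case_right (M : Tm Loc Ch) (i : Ch) (N N' : Tm Loc Ch) :
      Step N N' → Step (.caseOf M i N) (.caseOf M i N')
  | loop_body (M M' : Tm Loc Ch) (i : Ch) :
      Step M M' → Step (.loop M i) (.loop M' i)

/-- Affine reduction: the contextual closure of the rules passage, select,
reject, prefix(pop), prefix(push), associate. -/
inductive AffStep : Tm Loc Ch → Tm Loc Ch → Prop where
  | passage (N : Tm Loc Ch) (a b : Loc) (M : Tm Loc Ch) (h : a ≠ b) :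
      AffStep (.push N b (.pop a M)) (.pop a (.push (N.lift 0) b M))
  | select (i : Ch) (M : Tm Loc Ch) :
      AffStep (.caseOf (.choice i) i M) M
  | reject (i j : Ch) (M : Tm Loc Ch) (h : i ≠ j) :
      AffStep (.caseOf (.choice i) j M) (.choice i)
  | prefixPop (a : Loc) (N : Tm Loc Ch) (i : Ch) (M : Tm Loc Ch) :
      AffStep (.caseOf (.pop a N) i M) (.pop a (.caseOf N i (M.lift 0)))
  | prefixPush (P : Tm Loc Ch) (a : Loc) (N : Tm Loc Ch) (i : Ch) (M : Tm Loc Ch) :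
      AffStep (.caseOf (.push P a N) i M) (.push P a (.caseOf N i M))
  | assoc (P : Tm Loc Ch) (i : Ch) (N M : Tm Loc Ch) :
      AffStep (.caseOf (.caseOf P i N) i M) (.caseOf P i (.caseOf N i M))
  | push_left (N N' : Tm Loc Ch) (a : Loc) (M : Tm Loc Ch) :
      AffStep N N' → AffStep (.push N a M) (.push N' a M)
  | push_right (N : Tm Loc Ch) (a : Loc) (M M' : Tm Loc Ch) :
      AffStep M M' → AffStep (.push N a M) (.push N a M')
  | pop_body (a : Loc) (M M' : Tm Loc Ch) :
      AffStep M M' → AffStep (.pop a M) (.pop a M')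
  | case_left (M M' : Tm Loc Ch) (i : Ch) (N : Tm Loc Ch) :
      AffStep M M' → AffStep (.caseOf M i N) (.caseOf M' i N)
  | case_right (M : Tm Loc Ch) (i : Ch) (N N' : Tm Loc Ch) :
      AffStep N N' → AffStep (.caseOf M i N) (.caseOf M i N')
  | loop_body (M M' : Tm Loc Ch) (i : Ch) :
      AffStep M M' → AffStep (.loop M i) (.loop M' i)

/-- Parallel duplicating reduction `M ⇒_dup N`: `N` is the marked reduct of
`M` for some marking of beta- and unroll-redexes. -/
inductive Par : Tm Loc Ch → Tm Loc Ch → Prop where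
  | var (n : ℕ) : Par (.var n) (.var n)
  | choice (i : Ch) : Par (.choice i) (.choice i)
  | push (N N' : Tm Loc Ch) (a : Loc) (M M' : Tm Loc Ch) :
      Par N N' → Par M M' → Par (.push N a M) (.push N' a M')
  | pop (a : Loc) (M M' : Tm Loc Ch) :
      Par M M' → Par (.pop a M) (.pop a M')
  | caseOf (M M' : Tm Loc Ch) (i : Ch) (N N' : Tm Loc Ch) :
      Par M M' → Par N N' → Par (.caseOf M i N) (.caseOf M' i N')
  | loop (M M' : Tm Loc Ch) (i : Ch) :
      Par M M' → Par (.loop M i) (.loop M' i)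
  | beta (N N' : Tm Loc Ch) (a : Loc) (M M' : Tm Loc Ch) :
      Par N N' → Par M M' → Par (.push N a (.pop a M)) (M'.subst 0 N')
  | unroll (M M' : Tm Loc Ch) (i : Ch) :
      Par M M' → Par (.loop M i) (.caseOf M' i (.loop M' i))

/-- `P` is an affine normal form of `M`. -/
def AffNF (M P : Tm Loc Ch) : Prop :=
  Relation.ReflTransGen AffStep M P ∧ ∀ Q, ¬ AffStep P Q

/-- Complete reduction `M ⇛ N`: a parallel duplicating step followed by
affine normalization. -/
def Comp (M N : Tm Loc Ch) : Prop :=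
  ∃ P, Par M P ∧ AffNF P N

open Relation

theorem Relation.newman {α : Type*} {r : α → α → Prop} (hwf : WellFounded (flip r))
    (hlc : ∀ {a b c}, r a b → r a c → Join (ReflTransGen r) b c) {a b c : α}
    (hab : ReflTransGen r a b) (hac : ReflTransGen r a c) : Join (ReflTransGen r) b c := by
  induction a using hwf.induction generalizing b c with
  | _ a ih =>
    rcases hab.cases_head with rfl | ⟨b₁, hab₁, hb₁b⟩
    · exact ⟨c, hac, .refl⟩
    rcases hac.cases_head with rfl | ⟨c₁, hac₁, hc₁c⟩
    · exact ⟨b, .refl, hab⟩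
    obtain ⟨d, hb₁d, hc₁d⟩ := hlc hab₁ hac₁
    obtain ⟨e, hbe, hde⟩ := ih b₁ hab₁ hb₁b hb₁d
    obtain ⟨f, hcf, hef⟩ := ih c₁ hac₁ hc₁c (hc₁d.trans hde)
    exact ⟨f, hbe.trans hef, hcf⟩

namespace Tm

theorem lift_lift (M : Tm Loc Ch) {d d' : ℕ} (h : d' ≤ d) :
    (M.lift d).lift d' = (M.lift d').lift (d + 1) := by
  induction M generalizing d d' with
  | var n => simp only [lift]; split_ifs <;> simp only [lift] <;> split_ifs <;> grind
  | push N a M ihN ihM => simp only [lift, ihN h, ihM h]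
  | pop a M ih => simp only [lift, ih (Nat.succ_le_succ h)]
  | choice i => rfl
  | caseOf M i N ihM ihN => simp only [lift, ihM h, ihN h]
  | loop M i ih => simp only [lift, ih h]

theorem subst_lift (M N : Tm Loc Ch) (k : ℕ) : (M.lift k).subst k N = M := by
  induction M generalizing k N with
  | var n => simp only [lift]; split_ifs <;> simp only [subst] <;> split_ifs <;> grind
  | push P a M ihP ihM => simp only [lift, subst, ihP, ihM]
  | pop a M ih => simp only [lift, subst, ih]
  | choice i => rfl
  | caseOf M i P ihM ihP => simp only [lift, subst, ihM, ihP]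
  | loop M i ih => simp only [lift, subst, ih]

theorem lift_subst_of_le (M N : Tm Loc Ch) {k d : ℕ} (h : d ≤ k) :
    (M.subst k N).lift d = (M.lift d).subst (k + 1) (N.lift d) := by
  induction M generalizing k N d with
  | var n =>
    simp only [lift, subst]; split_ifs <;> simp only [lift, subst] <;> split_ifs <;> grind
  | push P a M ihP ihM => simp only [lift, subst, ihP N h, ihM N h]
  | pop a M ih =>
    simp only [lift, subst, ih (N.lift 0) (Nat.succ_le_succ h), lift_lift N (Nat.zero_le d)]
  | choice i => rfl
  | caseOf M i P ihM ihP => simp only [lift, subst, ihM N h, ihP N h]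
  | loop M i ih => simp only [lift, subst, ih N h]

theorem lift_subst_of_ge (M N : Tm Loc Ch) {k d : ℕ} (h : k ≤ d) :
    (M.subst k N).lift d = (M.lift (d + 1)).subst k (N.lift d) := by
  induction M generalizing k N d with
  | var n =>
    simp only [lift, subst]; split_ifs <;> simp only [lift, subst] <;> split_ifs <;> grind
  | push P a M ihP ihM => simp only [lift, subst, ihP N h, ihM N h]
  | pop a M ih =>
    simp only [lift, subst, ih (N.lift 0) (Nat.succ_le_succ h), lift_lift N (Nat.zero_le d)]
  | choice i => rfl
  | caseOf M i P ihM ihP => simp only [lift, subst, ihM N h, ihP N h]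
  | loop M i ih => simp only [lift, subst, ih N h]

/-- Push bodies count twice so that passage, which moves a pop above a push, decreases the
weight; the product in the `caseOf` clause makes prefix and associate, which move a case
construct inwards, decrease it. -/
def weight : Tm Loc Ch → ℕ
  | var _ => 2
  | choice _ => 2
  | push N _ M => N.weight + 2 * M.weight
  | pop _ M => M.weight + 1
  | caseOf M _ N => M.weight * (N.weight + 1)
  | loop M _ => M.weight + 1

theorem two_le_weight (M : Tm Loc Ch) : 2 ≤ M.weight := by
  induction M with
  | caseOf M i N ihM ihN => simp only [weight]; nlinarith
  | _ => simp only [weight]; omega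

theorem weight_lift (M : Tm Loc Ch) (d : ℕ) : (M.lift d).weight = M.weight := by
  induction M generalizing d with
  | var n => simp only [lift]; split_ifs <;> rfl
  | _ => simp only [lift, weight, *]

end Tm

namespace AffStep

theorem lift {M M' : Tm Loc Ch} (h : AffStep M M') (d : ℕ) :
    AffStep (M.lift d) (M'.lift d) := by
  induction h generalizing d with
  | passage N a b M hab =>
    simpa only [Tm.lift, ← Tm.lift_lift N (Nat.zero_le d)] using passage _ a b _ hab
  | prefixPop a N i M =>
    simpa only [Tm.lift, ← Tm.lift_lift M (Nat.zero_le d)] using prefixPop a _ i _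
  | pop_body a M M' _ ih => exact pop_body a _ _ (ih (d + 1))
  | _ => constructor <;> solve_by_elim

theorem subst {M M' : Tm Loc Ch} (h : AffStep M M') (k : ℕ) (N : Tm Loc Ch) :
    AffStep (M.subst k N) (M'.subst k N) := by
  induction h generalizing k N with
  | passage P a b M hab =>
    simpa only [Tm.subst, ← Tm.lift_subst_of_le P N (Nat.zero_le k)] using passage _ a b _ hab
  | prefixPop a P i M =>
    simpa only [Tm.subst, ← Tm.lift_subst_of_le M N (Nat.zero_le k)] using prefixPop a _ i _
  | pop_body a M M' _ ih => exact pop_body a _ _ (ih (k + 1) (N.lift 0))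
  | _ => constructor <;> solve_by_elim

theorem weight_lt {M M' : Tm Loc Ch} (h : AffStep M M') : M'.weight < M.weight := by
  induction h with
  | passage => simp only [Tm.weight, Tm.weight_lift]; omega
  | select i M => have := M.two_le_weight; simp only [Tm.weight]; omega
  | reject i j M => have := M.two_le_weight; simp only [Tm.weight]; nlinarith
  | prefixPop a N i M =>
    have := N.two_le_weight; have := M.two_le_weight
    simp only [Tm.weight, Tm.weight_lift]; nlinarith
  | prefixPush P a N i M =>
    have := P.two_le_weight; have := M.two_le_weight; simp only [Tm.weight]; nlinarith
  | assoc P i N M =>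
    have := P.two_le_weight; have := M.two_le_weight; simp only [Tm.weight]; nlinarith
  | case_left M M' i N => have := N.two_le_weight; simp only [Tm.weight]; nlinarith
  | case_right M i N N' => have := M.two_le_weight; simp only [Tm.weight]; nlinarith
  | push_left | push_right | pop_body | loop_body => simp only [Tm.weight]; omega

theorem wellFounded_flip : WellFounded (flip (@AffStep Loc Ch)) :=
  Subrelation.wf (fun h => h.weight_lt) (InvImage.wf Tm.weight wellFounded_lt)

theorem exists_eq_pop {a : Loc} {M X : Tm Loc Ch} (h : AffStep (.pop a M) X) :
    ∃ M', X = .pop a M' ∧ AffStep M M' := by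
  cases h with
  | pop_body _ _ M' h => exact ⟨M', rfl, h⟩

end AffStep

abbrev AffStar : Tm Loc Ch → Tm Loc Ch → Prop := ReflTransGen AffStep

namespace AffStar

variable {M M' N N' : Tm Loc Ch}

theorem push (hN : AffStar N N') (a : Loc) (hM : AffStar M M') :
    AffStar (.push N a M) (.push N' a M') :=
  (ReflTransGen.lift (fun X => Tm.push X a M) (fun _ _ h => .push_left _ _ a M h) _ _ hN).trans
    (ReflTransGen.lift (Tm.push N' a) (fun _ _ h => .push_right N' a _ _ h) _ _ hM)

theorem pop (a : Loc) (h : AffStar M M') : AffStar (.pop a M) (.pop a M') :=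
  ReflTransGen.lift (Tm.pop a) (fun _ _ h => .pop_body a _ _ h) _ _ h

theorem caseOf (hM : AffStar M M') (i : Ch) (hN : AffStar N N') :
    AffStar (.caseOf M i N) (.caseOf M' i N') :=
  (ReflTransGen.lift (fun X => Tm.caseOf X i N) (fun _ _ h => .case_left _ _ i N h) _ _ hM).trans
    (ReflTransGen.lift (Tm.caseOf M' i) (fun _ _ h => .case_right M' i _ _ h) _ _ hN)

theorem loop (h : AffStar M M') (i : Ch) : AffStar (.loop M i) (.loop M' i) :=
  ReflTransGen.lift (fun X => Tm.loop X i) (fun _ _ h => .loop_body _ _ i h) _ _ h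

theorem lift (h : AffStar M M') (d : ℕ) : AffStar (M.lift d) (M'.lift d) :=
  ReflTransGen.lift (fun X => Tm.lift X d) (fun _ _ h => h.lift d) _ _ h

theorem subst_left (h : AffStar M M') (k : ℕ) (N : Tm Loc Ch) :
    AffStar (M.subst k N) (M'.subst k N) :=
  ReflTransGen.lift (fun X => Tm.subst X k N) (fun _ _ h => h.subst k N) _ _ h

theorem subst_right (M : Tm Loc Ch) (k : ℕ) (h : AffStar N N') :
    AffStar (M.subst k N) (M.subst k N') := by
  induction M generalizing k N N' with
  | var n => simp only [Tm.subst]; split_ifs <;> first | exact h | rfl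
  | push P a M ihP ihM => exact (ihP k h).push a (ihM k h)
  | pop a M ih => exact (ih (k + 1) (h.lift 0)).pop a
  | choice i => rfl
  | caseOf M i P ihM ihP => exact (ihM k h).caseOf i (ihP k h)
  | loop M i ih => exact (ih k h).loop i

theorem exists_eq_pop {a : Loc} {Y : Tm Loc Ch} (h : AffStar (.pop a M) Y) :
    ∃ M', Y = .pop a M' ∧ AffStar M M' := by
  induction h with
  | refl => exact ⟨M, rfl, .refl⟩
  | tail _ hstep ih =>
    obtain ⟨M₁, rfl, hM₁⟩ := ih
    obtain ⟨M₂, rfl, hM₂⟩ := hstep.exists_eq_pop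
    exact ⟨M₂, rfl, hM₁.tail hM₂⟩

theorem weight_le (h : AffStar M N) : N.weight ≤ M.weight := by
  induction h with
  | refl => exact le_rfl
  | tail _ hstep ih => exact hstep.weight_lt.le.trans ih

end AffStar

namespace AffStep

theorem join_passage {N M X : Tm Loc Ch} {a b : Loc} (hab : a ≠ b)
    (h : AffStep (.push N b (.pop a M)) X) :
    Join AffStar (.pop a (.push (N.lift 0) b M)) X := by
  cases h with
  | passage => exact ⟨_, .refl, .refl⟩
  | push_left _ N' _ _ h =>
    exact ⟨_, (AffStar.push (.single (h.lift 0)) b .refl).pop a, .single (passage N' a b M hab)⟩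
  | push_right _ _ _ _ h =>
    obtain ⟨M', rfl, hM⟩ := h.exists_eq_pop
    exact ⟨_, (AffStar.push .refl b (.single hM)).pop a, .single (passage N a b M' hab)⟩

theorem join_select {i : Ch} {M X : Tm Loc Ch} (h : AffStep (.caseOf (.choice i) i M) X) :
    Join AffStar M X := by
  cases h with
  | select => exact ⟨M, .refl, .refl⟩
  | reject _ _ _ hii => exact absurd rfl hii
  | case_left _ _ _ _ h => cases h
  | case_right _ _ _ M' h => exact ⟨M', .single h, .single (select i M')⟩

theorem join_reject {i j : Ch} {M X : Tm Loc Ch} (hij : i ≠ j)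
    (h : AffStep (.caseOf (.choice i) j M) X) : Join AffStar (.choice i) X := by
  cases h with
  | select => exact absurd rfl hij
  | reject => exact ⟨_, .refl, .refl⟩
  | case_left _ _ _ _ h => cases h
  | case_right _ _ _ M' h => exact ⟨_, .refl, .single (reject i j M' hij)⟩

theorem join_prefixPop {a : Loc} {N M X : Tm Loc Ch} {i : Ch}
    (h : AffStep (.caseOf (.pop a N) i M) X) :
    Join AffStar (.pop a (.caseOf N i (M.lift 0))) X := by
  cases h with
  | prefixPop => exact ⟨_, .refl, .refl⟩
  | case_left _ _ _ _ h =>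
    obtain ⟨N', rfl, hN⟩ := h.exists_eq_pop
    exact ⟨_, (AffStar.caseOf (.single hN) i .refl).pop a, .single (prefixPop a N' i M)⟩
  | case_right _ _ _ M' h =>
    exact ⟨_, (AffStar.caseOf .refl i (.single (h.lift 0))).pop a, .single (prefixPop a N i M')⟩

theorem join_prefixPush {P N M X : Tm Loc Ch} {b : Loc} {i : Ch}
    (h : AffStep (.caseOf (.push P b N) i M) X) :
    Join AffStar (.push P b (.caseOf N i M)) X := by
  cases h with
  | prefixPush => exact ⟨_, .refl, .refl⟩
  | case_left _ _ _ _ h =>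
    cases h with
    | passage _ a _ N₀ hab =>
      exact ⟨_, .head (push_right _ _ _ _ (prefixPop a N₀ i M)) (.single (passage _ a b _ hab)),
        .head (prefixPop a _ i M) (.single (pop_body _ _ _ (prefixPush _ b N₀ i _)))⟩
    | push_left _ P' _ _ h =>
      exact ⟨_, .single (push_left _ _ _ _ h), .single (prefixPush P' b N i M)⟩
    | push_right _ _ _ N' h =>
      exact ⟨_, .single (push_right _ _ _ _ (case_left _ _ _ _ h)), .single (prefixPush P b N' i M)⟩
  | case_right _ _ _ M' h =>
    exact ⟨_, .single (push_right _ _ _ _ (case_right _ _ _ _ h)), .single (prefixPush P b N i M')⟩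

theorem join_assoc {P N M X : Tm Loc Ch} {i : Ch} (h : AffStep (.caseOf (.caseOf P i N) i M) X) :
    Join AffStar (.caseOf P i (.caseOf N i M)) X := by
  cases h with
  | assoc => exact ⟨_, .refl, .refl⟩
  | case_left _ _ _ _ h =>
    cases h with
    | select => exact ⟨_, .single (select i _), .refl⟩
    | reject _ _ _ hij => exact ⟨_, .single (reject _ _ _ hij), .single (reject _ _ _ hij)⟩
    | prefixPop a P₀ =>
      exact ⟨_, .single (prefixPop a P₀ i _),
        .head (prefixPop a _ i M) (.single (pop_body _ _ _ (assoc P₀ i _ _)))⟩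
    | prefixPush R b P₀ =>
      exact ⟨_, .single (prefixPush R b P₀ i _),
        .head (prefixPush R b _ i M) (.single (push_right _ _ _ _ (assoc P₀ i N M)))⟩
    | assoc P₁ _ P₀ =>
      exact ⟨_, .single (assoc P₁ i P₀ _),
        .head (assoc P₁ i _ M) (.single (case_right _ _ _ _ (assoc P₀ i N M)))⟩
    | case_left _ P' _ _ h =>
      exact ⟨_, .single (case_left _ _ _ _ h), .single (assoc P' i N M)⟩
    | case_right _ _ _ N' h =>
      exact ⟨_, .single (case_right _ _ _ _ (case_left _ _ _ _ h)), .single (assoc P i N' M)⟩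
  | case_right _ _ _ M' h =>
    exact ⟨_, .single (case_right _ _ _ _ (case_right _ _ _ _ h)), .single (assoc P i N M')⟩

variable {M M' N N' X : Tm Loc Ch}

theorem join_push_left {a : Loc} (h : AffStep N N') (hX : AffStep (.push N a M) X)
    (ih : ∀ {Y}, AffStep N Y → Join AffStar N' Y) : Join AffStar (.push N' a M) X := by
  cases hX with
  | passage _ _ _ _ hab => exact symm (join_passage hab (push_left _ _ _ _ h))
  | push_left _ _ _ _ h' =>
    obtain ⟨P, h₁, h₂⟩ := ih h'
    exact ⟨_, h₁.push a .refl, h₂.push a .refl⟩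
  | push_right _ _ _ _ h' =>
    exact ⟨_, .single (push_right _ _ _ _ h'), .single (push_left _ _ _ _ h)⟩

theorem join_push_right {a : Loc} (h : AffStep M M') (hX : AffStep (.push N a M) X)
    (ih : ∀ {Y}, AffStep M Y → Join AffStar M' Y) : Join AffStar (.push N a M') X := by
  cases hX with
  | passage _ _ _ _ hab => exact symm (join_passage hab (push_right _ _ _ _ h))
  | push_left _ _ _ _ h' =>
    exact ⟨_, .single (push_left _ _ _ _ h'), .single (push_right _ _ _ _ h)⟩
  | push_right _ _ _ _ h' =>
    obtain ⟨P, h₁, h₂⟩ := ih h'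
    exact ⟨_, AffStar.push .refl a h₁, AffStar.push .refl a h₂⟩

theorem join_case_left {i : Ch} (h : AffStep M M') (hX : AffStep (.caseOf M i N) X)
    (ih : ∀ {Y}, AffStep M Y → Join AffStar M' Y) : Join AffStar (.caseOf M' i N) X := by
  cases hX with
  | select | reject => cases h
  | prefixPop => exact symm (join_prefixPop (case_left _ _ _ _ h))
  | prefixPush => exact symm (join_prefixPush (case_left _ _ _ _ h))
  | assoc => exact symm (join_assoc (case_left _ _ _ _ h))
  | case_left _ _ _ _ h' =>
    obtain ⟨P, h₁, h₂⟩ := ih h'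
    exact ⟨_, h₁.caseOf i .refl, h₂.caseOf i .refl⟩
  | case_right _ _ _ _ h' =>
    exact ⟨_, .single (case_right _ _ _ _ h'), .single (case_left _ _ _ _ h)⟩

theorem join_case_right {i : Ch} (h : AffStep N N') (hX : AffStep (.caseOf M i N) X)
    (ih : ∀ {Y}, AffStep N Y → Join AffStar N' Y) : Join AffStar (.caseOf M i N') X := by
  cases hX with
  | select => exact ⟨_, .single (select i _), .single h⟩
  | reject _ _ _ hij => exact ⟨_, .single (reject _ _ _ hij), .refl⟩
  | prefixPop => exact symm (join_prefixPop (case_right _ _ _ _ h))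
  | prefixPush => exact symm (join_prefixPush (case_right _ _ _ _ h))
  | assoc => exact symm (join_assoc (case_right _ _ _ _ h))
  | case_left _ _ _ _ h' =>
    exact ⟨_, .single (case_left _ _ _ _ h'), .single (case_right _ _ _ _ h)⟩
  | case_right _ _ _ _ h' =>
    obtain ⟨P, h₁, h₂⟩ := ih h'
    exact ⟨_, AffStar.caseOf .refl i h₁, AffStar.caseOf .refl i h₂⟩

theorem join {M N₁ N₂ : Tm Loc Ch} (h₁ : AffStep M N₁) (h₂ : AffStep M N₂) :
    Join AffStar N₁ N₂ := by
  induction h₁ generalizing N₂ with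
  | passage _ _ _ _ hab => exact join_passage hab h₂
  | select => exact join_select h₂
  | reject _ _ _ hij => exact join_reject hij h₂
  | prefixPop => exact join_prefixPop h₂
  | prefixPush => exact join_prefixPush h₂
  | assoc => exact join_assoc h₂
  | push_left _ _ _ _ h ih => exact join_push_left h h₂ ih
  | push_right _ _ _ _ h ih => exact join_push_right h h₂ ih
  | case_left _ _ _ _ h ih => exact join_case_left h h₂ ih
  | case_right _ _ _ _ h ih => exact join_case_right h h₂ ih
  | pop_body a _ _ _ ih =>
    obtain ⟨_, rfl, h₂'⟩ := h₂.exists_eq_pop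
    obtain ⟨P, h₁, h₂⟩ := ih h₂'
    exact ⟨_, h₁.pop a, h₂.pop a⟩
  | loop_body _ _ i _ ih =>
    cases h₂ with
    | loop_body _ _ _ h₂ =>
      obtain ⟨P, h₁, h₂⟩ := ih h₂
      exact ⟨_, h₁.loop i, h₂.loop i⟩

end AffStep

theorem AffStar.join {M N₁ N₂ : Tm Loc Ch} (h₁ : AffStar M N₁) (h₂ : AffStar M N₂) :
    Join AffStar N₁ N₂ :=
  Relation.newman AffStep.wellFounded_flip AffStep.join h₁ h₂

theorem AffStar.eq_of_normal {P Q : Tm Loc Ch} (hP : ∀ X, ¬ AffStep P X) (h : AffStar P Q) :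
    P = Q := by
  rcases h.cases_head with rfl | ⟨R, hR, -⟩
  · rfl
  · exact absurd hR (hP R)

theorem AffNF.eq {M P Q : Tm Loc Ch} (hP : AffNF M P) (hQ : AffNF M Q) : P = Q := by
  obtain ⟨R, hPR, hQR⟩ := AffStar.join hP.1 hQ.1
  rw [hPR.eq_of_normal hP.2, hQR.eq_of_normal hQ.2]

theorem AffNF.of_affStar {M M' P : Tm Loc Ch} (hP : AffNF M P) (h : AffStar M M') :
    AffNF M' P := by
  obtain ⟨R, hM'R, hPR⟩ := h.join hP.1
  exact ⟨hPR.eq_of_normal hP.2 ▸ hM'R, hP.2⟩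

namespace Par

protected theorem refl (M : Tm Loc Ch) : Par M M := by
  induction M with
  | _ => constructor <;> assumption

theorem lift {M M' : Tm Loc Ch} (h : Par M M') (d : ℕ) : Par (M.lift d) (M'.lift d) := by
  induction h generalizing d with
  | var n => simp only [Tm.lift]; split_ifs <;> exact var _
  | pop a M M' _ ih => exact pop a _ _ (ih (d + 1))
  | beta N N' a M M' _ _ ihN ihM =>
    simpa only [Tm.lift, Tm.lift_subst_of_ge M' N' (Nat.zero_le d)] using
      beta _ _ a _ _ (ihN d) (ihM (d + 1))
  | _ => constructor <;> solve_by_elim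

end Par

theorem Step.affStep_or_par {M N : Tm Loc Ch} (h : Step M N) : AffStep M N ∨ Par M N := by
  induction h with
  | beta N a M => exact .inr (.beta N N a M M (.refl N) (.refl M))
  | unroll M i => exact .inr (.unroll M M i (.refl M))
  | push_left _ _ a M _ ih => exact ih.imp (.push_left _ _ a M) (.push _ _ a _ _ · (.refl M))
  | push_right N a _ _ _ ih => exact ih.imp (.push_right N a _ _) (.push _ _ a _ _ (.refl N))
  | pop_body a _ _ _ ih => exact ih.imp (.pop_body a _ _) (.pop a _ _)
  | case_left _ _ i N _ ih => exact ih.imp (.case_left _ _ i N) (.caseOf _ _ i _ _ · (.refl N))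
  | case_right M i _ _ _ ih => exact ih.imp (.case_right M i _ _) (.caseOf _ _ i _ _ (.refl M))
  | loop_body _ _ i _ ih => exact ih.imp (.loop_body _ _ i) (.loop _ _ i)
  | _ => left; constructor <;> assumption

def ParUpToAff (M N : Tm Loc Ch) : Prop :=
  ∃ M' N', AffStar M M' ∧ Par M' N' ∧ AffStar N N'

theorem Par.parUpToAff {M N : Tm Loc Ch} (h : Par M N) : ParUpToAff M N :=
  ⟨M, N, .refl, h, .refl⟩

namespace ParUpToAff

variable {P M M' N N' R X : Tm Loc Ch}

theorem push (hN : ParUpToAff N N') (a : Loc) (hM : ParUpToAff M M') :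
    ParUpToAff (.push N a M) (.push N' a M') := by
  obtain ⟨N₁, N₂, hN₁, hN₁₂, hN₂⟩ := hN
  obtain ⟨M₁, M₂, hM₁, hM₁₂, hM₂⟩ := hM
  exact ⟨_, _, hN₁.push a hM₁, .push _ _ a _ _ hN₁₂ hM₁₂, hN₂.push a hM₂⟩

theorem pop (a : Loc) (h : ParUpToAff M M') : ParUpToAff (.pop a M) (.pop a M') := by
  obtain ⟨M₁, M₂, hM₁, hM₁₂, hM₂⟩ := h
  exact ⟨_, _, hM₁.pop a, .pop a _ _ hM₁₂, hM₂.pop a⟩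

theorem caseOf (hM : ParUpToAff M M') (i : Ch) (hN : ParUpToAff N N') :
    ParUpToAff (.caseOf M i N) (.caseOf M' i N') := by
  obtain ⟨M₁, M₂, hM₁, hM₁₂, hM₂⟩ := hM
  obtain ⟨N₁, N₂, hN₁, hN₁₂, hN₂⟩ := hN
  exact ⟨_, _, hM₁.caseOf i hN₁, .caseOf _ _ i _ _ hM₁₂ hN₁₂, hM₂.caseOf i hN₂⟩

theorem loop (h : ParUpToAff M M') (i : Ch) : ParUpToAff (.loop M i) (.loop M' i) := by
  obtain ⟨M₁, M₂, hM₁, hM₁₂, hM₂⟩ := h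
  exact ⟨_, _, hM₁.loop i, .loop _ _ i hM₁₂, hM₂.loop i⟩

theorem unroll (h : ParUpToAff M M') (i : Ch) :
    ParUpToAff (.loop M i) (.caseOf M' i (.loop M' i)) := by
  obtain ⟨M₁, M₂, hM₁, hM₁₂, hM₂⟩ := h
  exact ⟨_, _, hM₁.loop i, .unroll _ _ i hM₁₂, hM₂.caseOf i (hM₂.loop i)⟩

theorem beta (hN : ParUpToAff N N') (a : Loc) (hM : ParUpToAff M M') :
    ParUpToAff (.push N a (.pop a M)) (M'.subst 0 N') := by
  obtain ⟨N₁, N₂, hN₁, hN₁₂, hN₂⟩ := hN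
  obtain ⟨M₁, M₂, hM₁, hM₁₂, hM₂⟩ := hM
  exact ⟨_, _, hN₁.push a (hM₁.pop a), .beta _ _ a _ _ hN₁₂ hM₁₂,
    (hM₂.subst_left 0 N').trans (AffStar.subst_right M₂ 0 hN₂)⟩

theorem of_pop {a : Loc} (h : ParUpToAff (.pop a M) (.pop a M')) : ParUpToAff M M' := by
  obtain ⟨X, Y, hX, hXY, hY⟩ := h
  obtain ⟨M₁, rfl, hM₁⟩ := hX.exists_eq_pop
  cases hXY with
  | pop _ _ M₂ hM₁₂ =>
    obtain ⟨M₃, hM₃, hM'₃⟩ := hY.exists_eq_pop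
    cases hM₃
    exact ⟨M₁, M₂, hM₁, hM₁₂, hM'₃⟩

theorem of_passage {a b : Loc} (hab : a ≠ b) (hp : Par (.push N b (.pop a M)) X) :
    ParUpToAff (.pop a (.push (N.lift 0) b M)) X := by
  cases hp with
  | push _ N' _ _ _ hN hM =>
    cases hM with
    | pop _ _ M' hM =>
      exact ⟨_, _, .refl, .pop a _ _ (.push _ _ b _ _ (hN.lift 0) hM),
        .single (.passage N' a b M' hab)⟩
  | beta => exact absurd rfl hab

theorem of_prefixPop {a : Loc} {i : Ch} (hp : Par (.caseOf (.pop a M) i R) X) :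
    ParUpToAff (.pop a (.caseOf M i (R.lift 0))) X := by
  cases hp with
  | caseOf _ _ _ _ R' hM hR =>
    cases hM with
    | pop _ _ M' hM =>
      exact ⟨_, _, .refl, .pop a _ _ (.caseOf _ _ i _ _ hM (hR.lift 0)),
        .single (.prefixPop a M' i R')⟩

/-- If the push heads a beta redex contracted by the parallel step, the case construct is
moved under the pop by prefix(pop) instead, and the contracted redex absorbs it. -/
theorem of_prefixPush {a : Loc} {i : Ch} (hp : Par (.caseOf (.push P a M) i R) X) :
    ParUpToAff (.push P a (.caseOf M i R)) X := by
  cases hp with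
  | caseOf _ _ _ _ R' hPM hR =>
    cases hPM with
    | push _ P' _ _ M' hP hM =>
      exact ⟨_, _, .refl, .push _ _ a _ _ hP (.caseOf _ _ i _ _ hM hR),
        .single (.prefixPush P' a M' i R')⟩
    | beta _ P' _ M₀ M₀' hP hM =>
      refine ⟨_, _, .single (.push_right _ _ _ _ (.prefixPop a M₀ i R)),
        .beta _ _ a _ _ hP (.caseOf _ _ i _ _ hM (hR.lift 0)), ?_⟩
      rw [Tm.subst, Tm.subst_lift]

theorem of_assoc {i : Ch} (hp : Par (.caseOf (.caseOf P i M) i R) X) :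
    ParUpToAff (.caseOf P i (.caseOf M i R)) X := by
  cases hp with
  | caseOf _ _ _ _ R' hPM hR =>
    cases hPM with
    | caseOf _ P' _ _ M' hP hM =>
      exact ⟨_, _, .refl, .caseOf _ _ i _ _ hP (.caseOf _ _ i _ _ hM hR),
        .single (.assoc P' i M' R')⟩

end ParUpToAff

theorem AffStep.parUpToAff_of_par {M M' N : Tm Loc Ch} (h : AffStep M M') (hp : Par M N) :
    ParUpToAff M' N := by
  induction h generalizing N with
  | passage _ _ _ _ hab => exact .of_passage hab hp
  | select i M =>
    cases hp with
    | caseOf _ _ _ _ M' hi hM =>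
      cases hi
      exact ⟨_, _, .refl, hM, .single (.select i M')⟩
  | reject i j M hij =>
    cases hp with
    | caseOf _ _ _ _ M' hi hM =>
      cases hi
      exact ⟨_, _, .refl, .choice i, .single (.reject i j M' hij)⟩
  | prefixPop => exact .of_prefixPop hp
  | prefixPush => exact .of_prefixPush hp
  | assoc => exact .of_assoc hp
  | push_left _ _ a _ _ ih =>
    cases hp with
    | push _ _ _ _ _ hP hQ => exact (ih hP).push a hQ.parUpToAff
    | beta _ _ _ _ _ hP hQ => exact (ih hP).beta a hQ.parUpToAff
  | push_right _ a _ _ h ih =>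
    cases hp with
    | push _ _ _ _ _ hP hQ => exact hP.parUpToAff.push a (ih hQ)
    | beta _ _ _ _ _ hP hQ =>
      obtain ⟨_, rfl, -⟩ := h.exists_eq_pop
      exact hP.parUpToAff.beta a (ih (.pop a _ _ hQ)).of_pop
  | pop_body a _ _ _ ih =>
    cases hp with
    | pop _ _ _ hQ => exact (ih hQ).pop a
  | case_left _ _ i _ _ ih =>
    cases hp with
    | caseOf _ _ _ _ _ hS hR => exact (ih hS).caseOf i hR.parUpToAff
  | case_right _ i _ _ _ ih =>
    cases hp with
    | caseOf _ _ _ _ _ hS hR => exact hS.parUpToAff.caseOf i (ih hR)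
  | loop_body _ _ i _ ih =>
    cases hp with
    | loop _ _ _ hQ => exact (ih hQ).loop i
    | unroll _ _ _ hQ => exact (ih hQ).unroll i

theorem Par.exists_par_of_affNF {M N Ma : Tm Loc Ch} (hp : Par M N) (hMa : AffNF M Ma) :
    ∃ P, Par Ma P ∧ AffStar N P := by
  rcases hMa.1.cases_head with rfl | ⟨M₁, hM₁, -⟩
  · exact ⟨N, hp, .refl⟩
  obtain ⟨M₂, N₂, hM₁₂, hp₂, hN₂⟩ := hM₁.parUpToAff_of_par hp
  have : M₂.weight < M.weight := hM₁₂.weight_le.trans_lt hM₁.weight_lt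
  obtain ⟨P, hP, hN₂P⟩ := hp₂.exists_par_of_affNF (hMa.of_affStar (.head hM₁ hM₁₂))
  exact ⟨P, hP, hN₂.trans hN₂P⟩
termination_by M.weight

/-- Affine normalization maps a reduction step to a complete reduction step. -/
theorem affnf_maps_step_to_complete (M N Ma Na : Tm Loc Ch) (h : Step M N)
    (hMa : AffNF M Ma) (hNa : AffNF N Na) : Comp Ma Na := by
  rcases h.affStep_or_par with haff | hpar
  · obtain rfl : Ma = Na := hMa.eq ⟨.head haff hNa.1, hNa.2⟩
    exact ⟨Ma, .refl Ma, .refl, hNa.2⟩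
  · obtain ⟨P, hP, hNP⟩ := hpar.exists_par_of_affNF hMa
    exact ⟨P, hP, hNa.of_affStar hNP⟩
end

section
/- Subject substitution: if Γ ⊢ N : s and Γ, x:s ⊢ M : t, then Γ ⊢ {N/x}M : t. -/
variable {Loc Ch : Type}

/-- Types `!!s => !!t_I`: an implication from a memory type (family of stack
types indexed by locations) to a sum type (family of memory types indexed
by a set of choices, represented via `Option`). -/
inductive Ty (Loc Ch : Type) : Type where
  | arr : (Loc → List (Ty Loc Ch)) → (Ch → Option (Loc → List (Ty Loc Ch))) → Ty Loc Ch

/-- Stack types: lists of types (head = top of stack). -/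
abbrev StackTy (Loc Ch : Type) := List (Ty Loc Ch)

/-- Memory types: families of stack types indexed by locations. -/
abbrev MemTy (Loc Ch : Type) := Loc → StackTy Loc Ch

/-- Sum types: families of memory types indexed by a set of choices
(`T i = some m` means `i` is in the index set with memory type `m`). -/
abbrev SumTy (Loc Ch : Type) := Ch → Option (MemTy Loc Ch)

/-- The empty memory type `ε`. -/
def memNil : MemTy Loc Ch := fun _ => []

/-- `memCons a r s` is `a(r)·!!s`: push the type `r` on top at location `a`. -/
def memCons [DecidableEq Loc] (a : Loc) (r : Ty Loc Ch) (s : MemTy Loc Ch) : MemTy Loc Ch :=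
  Function.update s a (r :: s a)

/-- Pointwise concatenation of memory types (`r` on top of `s`). -/
def memApp (r s : MemTy Loc Ch) : MemTy Loc Ch := fun a => r a ++ s a

/-- The singleton sum type `!!m.i`. -/
def sumSingle [DecidableEq Ch] (i : Ch) (m : MemTy Loc Ch) : SumTy Loc Ch :=
  fun j => if j = i then some m else none

/-- Stack expansion of a sum type: place `s` underneath every summand. -/
def sumExpand (s : MemTy Loc Ch) (T : SumTy Loc Ch) : SumTy Loc Ch :=
  fun i => (T i).map fun m => memApp m s

/-- `sumOver S T` is the sum `!!s_I + !!t_{J∖I}`: `S` overriding `T`. -/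
def sumOver (S T : SumTy Loc Ch) : SumTy Loc Ch :=
  fun i => match S i with
    | some m => some m
    | none => T i

variable [DecidableEq Loc] [DecidableEq Ch]

/-- The typing judgement `Γ ⊢ M : t` of the simply-typed FMC with control,
with de Bruijn contexts (lists of types). -/
inductive Typing : List (Ty Loc Ch) → Tm Loc Ch → Ty Loc Ch → Prop where
  | var (Γ : List (Ty Loc Ch)) (n : ℕ) (t : Ty Loc Ch) (h : Γ[n]? = some t) :
      Typing Γ (.var n) t
  | choice (Γ : List (Ty Loc Ch)) (i : Ch) :
      Typing Γ (.choice i) (.arr memNil (sumSingle i memNil))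
  | push (Γ : List (Ty Loc Ch)) (N : Tm Loc Ch) (r : Ty Loc Ch) (a : Loc)
      (M : Tm Loc Ch) (s : MemTy Loc Ch) (T : SumTy Loc Ch) :
      Typing Γ N r → Typing Γ M (.arr (memCons a r s) T) →
      Typing Γ (.push N a M) (.arr s T)
  | pop (Γ : List (Ty Loc Ch)) (r : Ty Loc Ch) (a : Loc) (M : Tm Loc Ch)
      (s : MemTy Loc Ch) (T : SumTy Loc Ch) :
      Typing (r :: Γ) M (.arr s T) →
      Typing Γ (.pop a M) (.arr (memCons a r s) T)
  | caseOf (Γ : List (Ty Loc Ch)) (M N : Tm Loc Ch) (i : Ch)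
      (r s : MemTy Loc Ch) (T : SumTy Loc Ch) :
      Typing Γ M (.arr r (Function.update T i (some s))) →
      Typing Γ N (.arr s T) →
      Typing Γ (.caseOf M i N) (.arr r T)
  | loop (Γ : List (Ty Loc Ch)) (M : Tm Loc Ch) (i : Ch)
      (s : MemTy Loc Ch) (T : SumTy Loc Ch) (h : T i = none) :
      Typing Γ M (.arr s (Function.update T i (some s))) →
      Typing Γ (.loop M i) (.arr s T)
  | expand (Γ : List (Ty Loc Ch)) (M : Tm Loc Ch)
      (r s : MemTy Loc Ch) (T : SumTy Loc Ch) :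
      Typing Γ M (.arr r T) →
      Typing Γ M (.arr (memApp r s) (sumExpand s T))
  | incl (Γ : List (Ty Loc Ch)) (M : Tm Loc Ch) (r : MemTy Loc Ch)
      (T U : SumTy Loc Ch) (h : ∀ i, T i = none ∨ U i = none) :
      Typing Γ M (.arr r T) →
      Typing Γ M (.arr r (sumOver T U))

theorem typing_lift {Γ : List (Ty Loc Ch)} {M : Tm Loc Ch} {t : Ty Loc Ch}
    (h : Typing Γ M t) :
    ∀ Γ₁ Γ₂ : List (Ty Loc Ch), ∀ u : Ty Loc Ch, Γ = Γ₁ ++ Γ₂ →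
      Typing (Γ₁ ++ u :: Γ₂) (M.lift Γ₁.length) t := by
  induction h with
  | var Γ n t h =>
    intro Γ₁ Γ₂ u hΓ
    subst hΓ
    simp only [Tm.lift]
    split
    · refine .var _ _ _ ?_
      rwa [List.getElem?_append_left (by omega), ← List.getElem?_append_left (by omega)]
    · rename_i hn
      refine .var _ _ _ ?_
      rw [List.getElem?_append_right (by omega)] at h ⊢
      have : n + 1 - Γ₁.length = (n - Γ₁.length) + 1 := by omega
      rw [this]
      simpa using h
  | choice Γ i => intro Γ₁ Γ₂ u hΓ; exact .choice _ _
  | push Γ N r a M s T hN hM ihN ihM =>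
    intro Γ₁ Γ₂ u hΓ
    exact .push _ _ _ _ _ _ _ (ihN _ _ _ hΓ) (ihM _ _ _ hΓ)
  | pop Γ r a M s T hM ih =>
    intro Γ₁ Γ₂ u hΓ
    exact .pop _ _ _ _ _ _ (ih (r :: Γ₁) Γ₂ u (by simp [hΓ]))
  | caseOf Γ M N i r s T hM hN ihM ihN =>
    intro Γ₁ Γ₂ u hΓ
    exact .caseOf _ _ _ _ _ _ _ (ihM _ _ _ hΓ) (ihN _ _ _ hΓ)
  | loop Γ M i s T h hM ih =>
    intro Γ₁ Γ₂ u hΓ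
    exact .loop _ _ _ _ _ h (ih _ _ _ hΓ)
  | expand Γ M r s T hM ih =>
    intro Γ₁ Γ₂ u hΓ
    exact .expand _ _ _ _ _ (ih _ _ _ hΓ)
  | incl Γ M r T U h hM ih =>
    intro Γ₁ Γ₂ u hΓ
    exact .incl _ _ _ _ _ h (ih _ _ _ hΓ)

theorem typing_subst {Γ' : List (Ty Loc Ch)} {M : Tm Loc Ch} {t : Ty Loc Ch}
    (h : Typing Γ' M t) :
    ∀ (Γ₁ Γ₂ : List (Ty Loc Ch)) (s : Ty Loc Ch), Γ' = Γ₁ ++ s :: Γ₂ →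
      ∀ N : Tm Loc Ch, Typing (Γ₁ ++ Γ₂) N s →
        Typing (Γ₁ ++ Γ₂) (M.subst Γ₁.length N) t := by
  induction h with
  | var Γ n t h =>
    intro Γ₁ Γ₂ s hΓ N hN
    subst hΓ
    simp only [Tm.subst]
    split
    · rename_i hn
      subst hn
      rw [List.getElem?_append_right (by omega)] at h
      simp at h
      rwa [← h]
    · split
      · rename_i hne hn
        refine .var _ _ _ ?_
        rwa [List.getElem?_append_left (by omega), ← List.getElem?_append_left (by omega)]
      · rename_i hne hn
        refine .var _ _ _ ?_
        rw [List.getElem?_append_right (by omega)] at h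
        rw [List.getElem?_append_right (by omega)]
        have : n - Γ₁.length = (n - 1 - Γ₁.length) + 1 := by omega
        rw [this] at h
        simpa using h
  | choice Γ i => intro Γ₁ Γ₂ s hΓ N hN; exact .choice _ _
  | push Γ P r a M ms T hP hM ihP ihM =>
    intro Γ₁ Γ₂ s hΓ N hN
    exact .push _ _ _ _ _ _ _ (ihP _ _ _ hΓ _ hN) (ihM _ _ _ hΓ _ hN)
  | pop Γ r a M ms T hM ih =>
    intro Γ₁ Γ₂ s hΓ N hN
    exact .pop _ _ _ _ _ _
      (ih (r :: Γ₁) Γ₂ s (by simp [hΓ]) (N.lift 0)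
        (typing_lift hN [] (Γ₁ ++ Γ₂) r rfl))
  | caseOf Γ M P i r ms T hM hP ihM ihP =>
    intro Γ₁ Γ₂ s hΓ N hN
    exact .caseOf _ _ _ _ _ _ _ (ihM _ _ _ hΓ _ hN) (ihP _ _ _ hΓ _ hN)
  | loop Γ M i ms T h hM ih =>
    intro Γ₁ Γ₂ s hΓ N hN
    exact .loop _ _ _ _ _ h (ih _ _ _ hΓ _ hN)
  | expand Γ M r ms T hM ih =>
    intro Γ₁ Γ₂ s hΓ N hN
    exact .expand _ _ _ _ _ (ih _ _ _ hΓ _ hN)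
  | incl Γ M r T U h hM ih =>
    intro Γ₁ Γ₂ s hΓ N hN
    exact .incl _ _ _ _ _ h (ih _ _ _ hΓ _ hN)

/-- Subject substitution: if `Γ ⊢ N : s` and `Γ, x:s ⊢ M : t` then
`Γ ⊢ {N/x}M : t`. -/
theorem subject_substitution (Γ : List (Ty Loc Ch)) (N M : Tm Loc Ch) (s t : Ty Loc Ch)
    (hN : Typing Γ N s) (hM : Typing (s :: Γ) M t) :
    Typing Γ (M.subst 0 N) t :=
  typing_subst hM [] Γ s rfl N hN
end

section
/- Subject reduction: if Γ ⊢ M : t and M → N, then Γ ⊢ N : t. -/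
variable {Loc Ch : Type}

variable [DecidableEq Loc] [DecidableEq Ch]

section SR

theorem memApp_memCons (a : Loc) (r : Ty Loc Ch) (s s' : MemTy Loc Ch) :
    memApp (memCons a r s) s' = memCons a r (memApp s s') := by
  funext b
  by_cases h : b = a <;> simp [memApp, memCons, Function.update_apply, h]

theorem memApp_memNil (s : MemTy Loc Ch) : memApp memNil s = s := by
  funext b; simp [memApp, memNil]

theorem sumExpand_update (s₀ : MemTy Loc Ch) (T : SumTy Loc Ch) (i : Ch) (m : MemTy Loc Ch) :
    sumExpand s₀ (Function.update T i (some m)) =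
      Function.update (sumExpand s₀ T) i (some (memApp m s₀)) := by
  funext j
  by_cases h : j = i <;> simp [sumExpand, Function.update_apply, h]

theorem sumOver_update (T U : SumTy Loc Ch) (i : Ch) (m : MemTy Loc Ch) :
    sumOver (Function.update T i (some m)) (Function.update U i none) =
      Function.update (sumOver T U) i (some m) := by
  funext j
  by_cases h : j = i <;> simp [sumOver, Function.update_apply, h]

theorem memCons_inj {a : Loc} {r r' : Ty Loc Ch} {s s' : MemTy Loc Ch}
    (h : memCons a r s = memCons a r' s') : r = r' ∧ s = s' := by
  have ha := congrFun h a
  simp [memCons, Function.update_apply] at ha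
  refine ⟨ha.1, funext fun b => ?_⟩
  by_cases hb : b = a
  · subst hb; exact ha.2
  · have := congrFun h b
    simpa [memCons, Function.update_apply, hb] using this

theorem weaken {Γ : List (Ty Loc Ch)} {M : Tm Loc Ch} {t} (h : Typing Γ M t) :
    ∀ Γ₁ Γ₂ (r' : Ty Loc Ch), Γ = Γ₁ ++ Γ₂ →
      Typing (Γ₁ ++ r' :: Γ₂) (M.lift Γ₁.length) t := by
  induction h with
  | var Γ n t hn =>
    rintro Γ₁ Γ₂ r' rfl
    by_cases hlt : n < Γ₁.length
    · simp only [Tm.lift, if_pos hlt]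
      refine .var _ _ _ ?_
      rw [List.getElem?_append_left hlt] at hn ⊢
      exact hn
    · simp only [Tm.lift, if_neg hlt]
      push_neg at hlt
      refine .var _ _ _ ?_
      rw [List.getElem?_append_right hlt] at hn
      rw [List.getElem?_append_right (by omega)]
      have : n + 1 - Γ₁.length = (n - Γ₁.length) + 1 := by omega
      rw [this]
      simpa using hn
  | choice Γ i => rintro Γ₁ Γ₂ r' rfl; exact .choice _ _
  | push Γ N r a M s T hN hM ihN ihM =>
    rintro Γ₁ Γ₂ r' rfl
    exact .push _ _ _ _ _ _ _ (ihN _ _ _ rfl) (ihM _ _ _ rfl)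
  | pop Γ r a M s T hM ihM =>
    rintro Γ₁ Γ₂ r' rfl
    exact .pop _ _ _ _ _ _ (ihM (r :: Γ₁) _ _ rfl)
  | caseOf Γ M N i r s T hM hN ihM ihN =>
    rintro Γ₁ Γ₂ r' rfl
    exact .caseOf _ _ _ _ _ _ _ (ihM _ _ _ rfl) (ihN _ _ _ rfl)
  | loop Γ M i s T h hM ihM =>
    rintro Γ₁ Γ₂ r' rfl
    exact .loop _ _ _ _ _ h (ihM _ _ _ rfl)
  | expand Γ M r s T hM ihM =>
    rintro Γ₁ Γ₂ r' rfl
    exact .expand _ _ _ _ _ (ihM _ _ _ rfl)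
  | incl Γ M r T U hc hM ihM =>
    rintro Γ₁ Γ₂ r' rfl
    exact .incl _ _ _ _ _ hc (ihM _ _ _ rfl)

theorem weaken0 {Γ : List (Ty Loc Ch)} {M : Tm Loc Ch} {t} (h : Typing Γ M t)
    (r' : Ty Loc Ch) : Typing (r' :: Γ) (M.lift 0) t :=
  weaken h [] Γ r' rfl

theorem substLem {Γ : List (Ty Loc Ch)} {M : Tm Loc Ch} {t} (h : Typing Γ M t) :
    ∀ Γ₁ Γ₂ (r : Ty Loc Ch) (N : Tm Loc Ch), Γ = Γ₁ ++ r :: Γ₂ →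
      Typing (Γ₁ ++ Γ₂) N r → Typing (Γ₁ ++ Γ₂) (M.subst Γ₁.length N) t := by
  induction h with
  | var Γ n t hn =>
    rintro Γ₁ Γ₂ r N rfl hN
    by_cases heq : n = Γ₁.length
    · subst heq
      simp only [Tm.subst, if_pos rfl]
      rw [List.getElem?_append_right (le_refl _)] at hn
      simp at hn
      exact hn ▸ hN
    · by_cases hlt : n < Γ₁.length
      · simp only [Tm.subst, if_neg heq, if_pos hlt]
        refine .var _ _ _ ?_
        rw [List.getElem?_append_left hlt] at hn ⊢
        exact hn
      · simp only [Tm.subst, if_neg heq, if_neg hlt]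
        push_neg at hlt
        refine .var _ _ _ ?_
        rw [List.getElem?_append_right hlt] at hn
        rw [List.getElem?_append_right (by omega)]
        have h2 : n - Γ₁.length = (n - 1 - Γ₁.length) + 1 := by omega
        rw [h2] at hn
        simpa using hn
  | choice Γ i => rintro Γ₁ Γ₂ r N rfl hN; exact .choice _ _
  | push Γ N r a M s T hN hM ihN ihM =>
    rintro Γ₁ Γ₂ r' N' rfl hN'
    exact .push _ _ _ _ _ _ _ (ihN _ _ _ _ rfl hN') (ihM _ _ _ _ rfl hN')
  | pop Γ r a M s T hM ihM =>
    rintro Γ₁ Γ₂ r' N' rfl hN'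
    exact .pop _ _ _ _ _ _ (ihM (r :: Γ₁) _ _ _ rfl (weaken0 hN' r))
  | caseOf Γ M N i r s T hM hN ihM ihN =>
    rintro Γ₁ Γ₂ r' N' rfl hN'
    exact .caseOf _ _ _ _ _ _ _ (ihM _ _ _ _ rfl hN') (ihN _ _ _ _ rfl hN')
  | loop Γ M i s T h hM ihM =>
    rintro Γ₁ Γ₂ r' N' rfl hN'
    exact .loop _ _ _ _ _ h (ihM _ _ _ _ rfl hN')
  | expand Γ M r s T hM ihM =>
    rintro Γ₁ Γ₂ r' N' rfl hN'
    exact .expand _ _ _ _ _ (ihM _ _ _ _ rfl hN')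
  | incl Γ M r T U hc hM ihM =>
    rintro Γ₁ Γ₂ r' N' rfl hN'
    exact .incl _ _ _ _ _ hc (ihM _ _ _ _ rfl hN')


theorem push_inv {Γ : List (Ty Loc Ch)} {P : Tm Loc Ch} {t} (h : Typing Γ P t) :
    ∀ {N a M s T}, P = Tm.push N a M → t = Ty.arr s T →
      ∃ r, Typing Γ N r ∧ Typing Γ M (.arr (memCons a r s) T) := by
  induction h with
  | push Γ N r a M s T hN hM _ _ =>
    rintro N' a' M' s' T' hP ht
    cases hP; cases ht
    exact ⟨r, hN, hM⟩
  | expand Γ M r s T hM ih =>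
    rintro N' a' M' s' T' rfl ht
    cases ht
    obtain ⟨r', hN, hM'⟩ := ih rfl rfl
    refine ⟨r', hN, ?_⟩
    rw [← memApp_memCons]
    exact Typing.expand _ _ _ _ _ hM'
  | incl Γ M r T U hc hM ih =>
    rintro N' a' M' s' T' rfl ht
    cases ht
    obtain ⟨r', hN, hM'⟩ := ih rfl rfl
    exact ⟨r', hN, .incl _ _ _ _ _ hc hM'⟩
  | var _ _ _ _ => rintro _ _ _ _ _ ⟨⟩
  | choice _ _ => rintro _ _ _ _ _ ⟨⟩
  | pop _ _ _ _ _ _ _ _ => rintro _ _ _ _ _ ⟨⟩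
  | caseOf _ _ _ _ _ _ _ _ _ _ _ => rintro _ _ _ _ _ ⟨⟩
  | loop _ _ _ _ _ _ _ _ => rintro _ _ _ _ _ ⟨⟩

theorem pop_inv {Γ : List (Ty Loc Ch)} {P : Tm Loc Ch} {t} (h : Typing Γ P t) :
    ∀ {a M m T}, P = Tm.pop a M → t = Ty.arr m T →
      ∃ r s, m = memCons a r s ∧ Typing (r :: Γ) M (.arr s T) := by
  induction h with
  | pop Γ r a M s T hM _ =>
    rintro a' M' m' T' hP ht
    cases hP; cases ht
    exact ⟨r, s, rfl, hM⟩
  | expand Γ M r s T hM ih =>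
    rintro a' M' m' T' rfl ht
    cases ht
    obtain ⟨r', s', rfl, hM'⟩ := ih rfl rfl
    exact ⟨r', memApp s' s, memApp_memCons _ _ _ _,
      Typing.expand _ _ _ _ _ hM'⟩
  | incl Γ M r T U hc hM ih =>
    rintro a' M' m' T' rfl ht
    cases ht
    obtain ⟨r', s', rfl, hM'⟩ := ih rfl rfl
    exact ⟨r', s', rfl, .incl _ _ _ _ _ hc hM'⟩
  | var _ _ _ _ => rintro _ _ _ _ ⟨⟩
  | choice _ _ => rintro _ _ _ _ ⟨⟩
  | push _ _ _ _ _ _ _ _ _ _ _ => rintro _ _ _ _ ⟨⟩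
  | caseOf _ _ _ _ _ _ _ _ _ _ _ => rintro _ _ _ _ ⟨⟩
  | loop _ _ _ _ _ _ _ _ => rintro _ _ _ _ ⟨⟩

theorem incl_update {Γ : List (Ty Loc Ch)} {M : Tm Loc Ch} {r : MemTy Loc Ch}
    {T U : SumTy Loc Ch} {i : Ch} {m : MemTy Loc Ch}
    (hc : ∀ j, T j = none ∨ U j = none)
    (h : Typing Γ M (.arr r (Function.update T i (some m)))) :
    Typing Γ M (.arr r (Function.update (sumOver T U) i (some m))) := by
  have := Typing.incl Γ M r (Function.update T i (some m)) (Function.update U i none)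
    (fun j => by
      by_cases hj : j = i
      · subst hj; right; simp [Function.update_apply]
      · simp only [Function.update_apply, if_neg hj]; exact hc j) h
  rwa [sumOver_update] at this

theorem case_inv {Γ : List (Ty Loc Ch)} {P : Tm Loc Ch} {t} (h : Typing Γ P t) :
    ∀ {M i N r T}, P = Tm.caseOf M i N → t = Ty.arr r T →
      ∃ s, Typing Γ M (.arr r (Function.update T i (some s))) ∧ Typing Γ N (.arr s T) := by
  induction h with
  | caseOf Γ M N i r s T hM hN _ _ =>
    rintro M' i' N' r' T' hP ht
    cases hP; cases ht
    exact ⟨s, hM, hN⟩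
  | expand Γ M r s T hM ih =>
    rintro M' i' N' r' T' rfl ht
    cases ht
    obtain ⟨s', hM', hN'⟩ := ih rfl rfl
    refine ⟨memApp s' s, ?_, Typing.expand _ _ _ _ _ hN'⟩
    rw [← sumExpand_update]
    exact Typing.expand _ _ _ _ _ hM'
  | incl Γ M r T U hc hM ih =>
    rintro M' i' N' r' T' rfl ht
    cases ht
    obtain ⟨s', hM', hN'⟩ := ih rfl rfl
    exact ⟨s', incl_update hc hM', .incl _ _ _ _ _ hc hN'⟩
  | var _ _ _ _ => rintro _ _ _ _ _ ⟨⟩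
  | choice _ _ => rintro _ _ _ _ _ ⟨⟩
  | push _ _ _ _ _ _ _ _ _ _ _ => rintro _ _ _ _ _ ⟨⟩
  | pop _ _ _ _ _ _ _ _ => rintro _ _ _ _ _ ⟨⟩
  | loop _ _ _ _ _ _ _ _ => rintro _ _ _ _ _ ⟨⟩

theorem loop_inv {Γ : List (Ty Loc Ch)} {P : Tm Loc Ch} {t} (h : Typing Γ P t) :
    ∀ {M i s T}, P = Tm.loop M i → t = Ty.arr s T →
      Typing Γ M (.arr s (Function.update T i (some s))) := by
  induction h with
  | loop Γ M i s T hTi hM _ =>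
    rintro M' i' s' T' hP ht
    cases hP; cases ht
    exact hM
  | expand Γ M r s T hM ih =>
    rintro M' i' s' T' rfl ht
    cases ht
    have := Typing.expand Γ _ _ s _ (ih rfl rfl)
    rwa [sumExpand_update] at this
  | incl Γ M r T U hc hM ih =>
    rintro M' i' s' T' rfl ht
    cases ht
    exact incl_update hc (ih rfl rfl)
  | var _ _ _ _ => rintro _ _ _ _ ⟨⟩
  | choice _ _ => rintro _ _ _ _ ⟨⟩
  | push _ _ _ _ _ _ _ _ _ _ _ => rintro _ _ _ _ ⟨⟩
  | pop _ _ _ _ _ _ _ _ => rintro _ _ _ _ ⟨⟩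
  | caseOf _ _ _ _ _ _ _ _ _ _ _ => rintro _ _ _ _ ⟨⟩

theorem choice_inv {Γ : List (Ty Loc Ch)} {P : Tm Loc Ch} {t} (h : Typing Γ P t) :
    ∀ {i r T}, P = Tm.choice i → t = Ty.arr r T → T i = some r := by
  induction h with
  | choice Γ i =>
    rintro i' r' T' hP ht
    cases hP; cases ht
    simp [sumSingle]
  | expand Γ M r s T hM ih =>
    rintro i' r' T' rfl ht
    cases ht
    simp [sumExpand, ih rfl rfl]
  | incl Γ M r T U hc hM ih =>
    rintro i' r' T' rfl ht
    cases ht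
    simp [sumOver, ih rfl rfl]
  | var _ _ _ _ => rintro _ _ _ ⟨⟩
  | push _ _ _ _ _ _ _ _ _ _ _ => rintro _ _ _ ⟨⟩
  | pop _ _ _ _ _ _ _ _ => rintro _ _ _ ⟨⟩
  | caseOf _ _ _ _ _ _ _ _ _ _ _ => rintro _ _ _ ⟨⟩
  | loop _ _ _ _ _ _ _ _ => rintro _ _ _ ⟨⟩

theorem choice_intro (Γ : List (Ty Loc Ch)) (i : Ch) (r : MemTy Loc Ch) (T : SumTy Loc Ch)
    (h : T i = some r) : Typing Γ (Tm.choice i) (.arr r T) := by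
  have h1 : Typing Γ (Tm.choice i) (.arr (memApp memNil r) (sumExpand r (sumSingle i memNil))) :=
    Typing.expand _ _ _ _ _ (Typing.choice Γ i)
  rw [memApp_memNil] at h1
  have h2 : sumExpand r (sumSingle i memNil) = sumSingle i r := by
    funext j
    by_cases hj : j = i <;> simp [sumExpand, sumSingle, hj, memApp_memNil]
  rw [h2] at h1
  have h3 := Typing.incl Γ (Tm.choice i) r (sumSingle i r)
    (fun j => if j = i then none else T j)
    (fun j => by by_cases hj : j = i <;> simp [sumSingle, hj]) h1
  have h4 : sumOver (sumSingle i r) (fun j => if j = i then none else T j) = T := by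
    funext j
    by_cases hj : j = i <;> simp [sumOver, sumSingle, hj]
    exact h.symm
  rwa [h4] at h3

end SR

theorem sr_aux {M N : Tm Loc Ch} (hstep : Step M N) :
    ∀ {Γ : List (Ty Loc Ch)} {t}, Typing Γ M t → Typing Γ N t := by
  induction hstep with
  | beta N a M =>
    intro Γ t hty
    obtain ⟨s, T⟩ := t
    obtain ⟨r, hN, hpop⟩ := push_inv hty rfl rfl
    obtain ⟨r₁, s₁, heq, hM⟩ := pop_inv hpop rfl rfl
    obtain ⟨hr, hs⟩ := memCons_inj heq
    subst hr; subst hs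
    exact substLem hM [] Γ r N rfl hN
  | passage N a b M hab =>
    intro Γ t hty
    obtain ⟨s, T⟩ := t
    obtain ⟨r, hN, hpop⟩ := push_inv hty rfl rfl
    obtain ⟨r', s', heq, hM⟩ := pop_inv hpop rfl rfl
    -- heq : memCons b r s = memCons a r' s', with a ≠ b
    have hba : b ≠ a := fun h => hab h.symm
    have ha : s a = r' :: s' a := by
      have := congrFun heq a
      simpa [memCons, Function.update_apply, hab, hba] using this
    set s₀ : MemTy Loc Ch := Function.update s a (s' a) with hs₀
    have hb : s' b = r :: s b := by
      have := congrFun heq b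
      simpa [memCons, Function.update_apply, hab, hba] using this.symm
    have hs : memCons a r' s₀ = s := by
      funext c
      by_cases hc : c = a
      · subst hc; simp [memCons, Function.update_apply, hs₀, ha]
      · simp [memCons, Function.update_apply, hc, hs₀]
    have hs' : memCons b r s₀ = s' := by
      funext c
      by_cases hcb : c = b
      · subst hcb; simp [memCons, Function.update_apply, hba, hs₀, hb]
      · by_cases hca : c = a
        · subst hca; simp [memCons, Function.update_apply, hab, hs₀]
        · have := congrFun heq c
          simp [memCons, Function.update_apply, hcb, hca] at this
          simp [memCons, Function.update_apply, hcb, hca, hs₀, this]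
    rw [← hs]
    refine Typing.pop _ _ _ _ _ _ (Typing.push _ _ _ _ _ _ _ (weaken0 hN r') ?_)
    rw [hs']
    exact hM
  | select i M =>
    intro Γ t hty
    obtain ⟨r, T⟩ := t
    obtain ⟨s, hch, hM⟩ := case_inv hty rfl rfl
    have := choice_inv hch rfl rfl
    simp [Function.update_apply] at this
    rwa [this] at hM
  | reject i j M hij =>
    intro Γ t hty
    obtain ⟨r, T⟩ := t
    obtain ⟨s, hch, hM⟩ := case_inv hty rfl rfl
    have := choice_inv hch rfl rfl
    rw [Function.update_apply, if_neg hij] at this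
    exact choice_intro _ _ _ _ this
  | prefixPop a P i M =>
    intro Γ t hty
    obtain ⟨r, T⟩ := t
    obtain ⟨s, hpop, hM⟩ := case_inv hty rfl rfl
    obtain ⟨r₀, r₁, rfl, hP⟩ := pop_inv hpop rfl rfl
    exact .pop _ _ _ _ _ _ (.caseOf _ _ _ _ _ _ _ hP (weaken0 hM r₀))
  | prefixPush P a Q i M =>
    intro Γ t hty
    obtain ⟨r, T⟩ := t
    obtain ⟨s, hpush, hM⟩ := case_inv hty rfl rfl
    obtain ⟨r₀, hP, hQ⟩ := push_inv hpush rfl rfl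
    exact .push _ _ _ _ _ _ _ hP (.caseOf _ _ _ _ _ _ _ hQ hM)
  | assoc P i Q M =>
    intro Γ t hty
    obtain ⟨r, T⟩ := t
    obtain ⟨s, hcase, hM⟩ := case_inv hty rfl rfl
    obtain ⟨s', hP, hQ⟩ := case_inv hcase rfl rfl
    rw [Function.update_idem] at hP
    exact .caseOf _ _ _ _ _ _ _ hP (.caseOf _ _ _ _ _ _ _ hQ hM)
  | unroll M i =>
    intro Γ t hty
    obtain ⟨s, T⟩ := t
    exact .caseOf _ _ _ _ _ _ _ (loop_inv hty rfl rfl) hty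
  | push_left N N' a M hNN ih =>
    intro Γ t hty
    obtain ⟨s, T⟩ := t
    obtain ⟨r, hN, hM⟩ := push_inv hty rfl rfl
    exact .push _ _ _ _ _ _ _ (ih hN) hM
  | push_right N a M M' hMM ih =>
    intro Γ t hty
    obtain ⟨s, T⟩ := t
    obtain ⟨r, hN, hM⟩ := push_inv hty rfl rfl
    exact .push _ _ _ _ _ _ _ hN (ih hM)
  | pop_body a M M' hMM ih =>
    intro Γ t hty
    obtain ⟨m, T⟩ := t
    obtain ⟨r, s, rfl, hM⟩ := pop_inv hty rfl rfl
    exact .pop _ _ _ _ _ _ (ih hM)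
  | case_left M M' i N hMM ih =>
    intro Γ t hty
    obtain ⟨r, T⟩ := t
    obtain ⟨s, hM, hN⟩ := case_inv hty rfl rfl
    exact .caseOf _ _ _ _ _ _ _ (ih hM) hN
  | case_right M i N N' hNN ih =>
    intro Γ t hty
    obtain ⟨r, T⟩ := t
    obtain ⟨s, hM, hN⟩ := case_inv hty rfl rfl
    exact .caseOf _ _ _ _ _ _ _ hM (ih hN)
  | loop_body M M' i hMM ih =>
    intro Γ t hty
    obtain ⟨s, T⟩ := t
    have hM' := ih (loop_inv hty rfl rfl)
    have h1 : Typing Γ (Tm.loop M' i) (.arr s (Function.update T i none)) := by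
      refine Typing.loop _ _ _ _ _ (by simp [Function.update_apply]) ?_
      rwa [Function.update_idem]
    have h2 := Typing.incl Γ (Tm.loop M' i) s (Function.update T i none)
      (fun j => if j = i then T i else none)
      (fun j => by by_cases hj : j = i <;> simp [Function.update_apply, hj]) h1
    have h3 : sumOver (Function.update T i none) (fun j => if j = i then T i else none) = T := by
      funext j
      by_cases hj : j = i
      · subst hj; simp [sumOver, Function.update_apply]
      · simp only [sumOver, Function.update_apply, if_neg hj]
        cases T j <;> simp
    rwa [h3] at h2

/-- Subject reduction: typing is preserved by reduction. -/
theorem subject_reduction (Γ : List (Ty Loc Ch)) (M N : Tm Loc Ch) (t : Ty Loc Ch)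
    (hty : Typing Γ M t) (hstep : Step M N) : Typing Γ N t :=
  sr_aux hstep hty
end

section
/- Machine progress: every typed machine state ⊢ (S_A, M, K) : ε => !!t_I is either final (of the form (S_A, i, ε) for a choice i) or has a machine transition. -/
variable {Loc Ch : Type}

variable [DecidableEq Loc]

/-- A memory: a family of stacks of terms indexed by the locations
(stacks are lists with the head as top). -/
def Mem (Loc Ch : Type) := Loc → List (Tm Loc Ch)

/-- `S.push a N` pushes `N` onto the stack at location `a`. -/
def Mem.push (S : Mem Loc Ch) (a : Loc) (N : Tm Loc Ch) : Mem Loc Ch :=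
  Function.update S a (N :: S a)

/-- The empty memory. -/
def Mem.empty : Mem Loc Ch := fun _ => []

/-- A continuation stack: a stack of conditional continuations `(i -> M)`. -/
abbrev CStack (Loc Ch : Type) := List (Ch × Tm Loc Ch)

/-- The transitions of the abstract machine on states `(S, M, K)`. -/
inductive MStep : Mem Loc Ch × Tm Loc Ch × CStack Loc Ch → Mem Loc Ch × Tm Loc Ch × CStack Loc Ch → Prop where
  | push (S : Mem Loc Ch) (N : Tm Loc Ch) (a : Loc) (M : Tm Loc Ch) (K : CStack Loc Ch) :
      MStep (S, .push N a M, K) (S.push a N, M, K)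
  | pop (S : Mem Loc Ch) (a : Loc) (N M : Tm Loc Ch) (K : CStack Loc Ch) :
      MStep (S.push a N, .pop a M, K) (S, M.subst 0 N, K)
  | select (S : Mem Loc Ch) (i : Ch) (M : Tm Loc Ch) (K : CStack Loc Ch) :
      MStep (S, .choice i, (i, M) :: K) (S, M, K)
  | reject (S : Mem Loc Ch) (i j : Ch) (M : Tm Loc Ch) (K : CStack Loc Ch) (h : i ≠ j) :
      MStep (S, .choice i, (j, M) :: K) (S, .choice i, K)
  | caseOf (S : Mem Loc Ch) (N : Tm Loc Ch) (i : Ch) (M : Tm Loc Ch) (K : CStack Loc Ch) :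
      MStep (S, .caseOf N i M, K) (S, N, (i, M) :: K)
  | loop (S : Mem Loc Ch) (M : Tm Loc Ch) (i : Ch) (K : CStack Loc Ch) :
      MStep (S, .loop M i, K) (S, M, (i, .loop M i) :: K)

variable [DecidableEq Loc] [DecidableEq Ch]

/-- Typing of memories: pointwise typing of the stacks by the stack types. -/
def MemTyped (S : Mem Loc Ch) (r : MemTy Loc Ch) : Prop :=
  ∀ a, List.Forall₂ (fun M t => Typing [] M t) (S a) (r a)

/-- Typing of continuation stacks `⊢ K : !!s_I => !!t_J`. -/
inductive ContTyped : CStack Loc Ch → SumTy Loc Ch → SumTy Loc Ch → Prop where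
  | nil (T : SumTy Loc Ch) : ContTyped [] T T
  | cons (i : Ch) (M : Tm Loc Ch) (r : MemTy Loc Ch) (S T : SumTy Loc Ch) (K : CStack Loc Ch) :
      Typing [] M (.arr r (sumOver S T)) → ContTyped K S T →
      ContTyped ((i, M) :: K) (Function.update S i (some r)) T

/-- Typing of machine states `⊢ (S, M, K) : ε => !!t_J`. -/
def StateTyped (st : Mem Loc Ch × Tm Loc Ch × CStack Loc Ch) (T : SumTy Loc Ch) : Prop :=
  ∃ (r : MemTy Loc Ch) (S : SumTy Loc Ch),
    MemTyped st.1 r ∧ Typing [] st.2.1 (.arr r (sumOver S T)) ∧ ContTyped st.2.2 S T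

/-!
Progress is a canonical-forms argument. The expansion and inclusion rules never change the
shape of a term, so a closed typed term is not a variable, and a typed pop `a<x>.M` expects a
nonempty stack at `a`; the typed memory then holds a term there to pop. Every other shape of
term, and a choice facing a nonempty continuation stack, steps by construction.
-/

section

omit [DecidableEq Loc] [DecidableEq Ch]

variable [DecidableEq Loc]

theorem Mem.exists_eq_push_of_ne_nil {S : Mem Loc Ch} {a : Loc} (h : S a ≠ []) :
    ∃ (S' : Mem Loc Ch) (N : Tm Loc Ch), S = S'.push a N := by
  obtain ⟨N, rest, hSa⟩ := List.exists_cons_of_ne_nil h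
  refine ⟨Function.update S a rest, N, funext fun x => ?_⟩
  by_cases hx : x = a
  · subst hx
    simp [Mem.push, Function.update, hSa]
  · simp [Mem.push, Function.update, hx]

variable [DecidableEq Ch]

theorem Typing.lt_length_of_var {Γ : List (Ty Loc Ch)} {n : ℕ} {t : Ty Loc Ch}
    (h : Typing Γ (.var n) t) : n < Γ.length := by
  generalize hM : Tm.var n = M at h
  induction h with
  | var Γ m t hm => cases hM; exact (List.getElem?_eq_some_iff.mp hm).1
  | expand _ _ _ _ _ _ ih => exact ih hM
  | incl _ _ _ _ _ _ _ ih => exact ih hM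
  | _ => cases hM

theorem Typing.not_closed_var (n : ℕ) (t : Ty Loc Ch) : ¬ Typing [] (.var n) t :=
  fun h => Nat.not_lt_zero n h.lt_length_of_var

theorem Typing.ne_nil_of_pop {Γ : List (Ty Loc Ch)} {a : Loc} {M : Tm Loc Ch}
    {r : MemTy Loc Ch} {T : SumTy Loc Ch} (h : Typing Γ (.pop a M) (.arr r T)) : r a ≠ [] := by
  generalize hM : Tm.pop a M = P at h
  generalize ht : Ty.arr r T = t at h
  induction h generalizing r T with
  | pop => cases hM; cases ht; simp [memCons]
  | expand _ _ r' _ _ _ ih =>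
      cases ht
      simpa [memApp] using fun hr' _ => ih hM rfl hr'
  | incl _ _ _ _ _ _ _ ih => cases ht; exact ih hM rfl
  | _ => cases hM

theorem MemTyped.ne_nil {S : Mem Loc Ch} {r : MemTy Loc Ch} (hS : MemTyped S r) {a : Loc}
    (hr : r a ≠ []) : S a ≠ [] := by
  rw [← List.length_pos_iff, (hS a).length_eq]
  exact List.length_pos_iff.mpr hr

end

/-- Machine progress: a typed state is either final or has a machine step. -/
theorem machine_progress (S : Mem Loc Ch) (M : Tm Loc Ch) (K : CStack Loc Ch)
    (T : SumTy Loc Ch) (hty : StateTyped (S, M, K) T) :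
    (∃ i : Ch, M = Tm.choice i ∧ K = []) ∨
      ∃ st' : Mem Loc Ch × Tm Loc Ch × CStack Loc Ch, MStep (S, M, K) st' := by
  obtain ⟨r, _, hS, hM, -⟩ := hty
  cases M with
  | var n => exact absurd hM (Typing.not_closed_var n _)
  | push N a M => exact .inr ⟨_, .push S N a M K⟩
  | pop a M =>
      obtain ⟨S', N, rfl⟩ := Mem.exists_eq_push_of_ne_nil (hS.ne_nil hM.ne_nil_of_pop)
      exact .inr ⟨_, .pop S' a N M K⟩
  | choice i =>
      match K with
      | [] => exact .inl ⟨i, rfl, rfl⟩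
      | (j, N) :: K =>
          by_cases hij : i = j
          · subst hij
            exact .inr ⟨_, .select S i N K⟩
          · exact .inr ⟨_, .reject S i j N K hij⟩
  | caseOf N i M => exact .inr ⟨_, .caseOf S N i M K⟩
  | loop M i => exact .inr ⟨_, .loop S M i K⟩
end

section
/- Type inhabitation: every type t of the FMC with control is inhabited by a closed term, namely ⊢ 0_t : t holds in the empty context for the zero term 0_t. -/
variable {Loc Ch : Type}

variable [DecidableEq Loc] [DecidableEq Ch]

/-- A type conforms to the grammar: all memory types and sum types occurring
in it are finitely supported families. -/
inductive TyWF : Ty Loc Ch → Prop where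
  | arr (s : MemTy Loc Ch) (T : SumTy Loc Ch)
      (hs1 : {a | s a ≠ []}.Finite)
      (hs2 : ∀ a, ∀ t ∈ s a, TyWF t)
      (hT1 : {i | T i ≠ none}.Finite)
      (hT2 : ∀ i m, T i = some m → {a | m a ≠ []}.Finite)
      (hT3 : ∀ i m, T i = some m → ∀ a, ∀ t ∈ m a, TyWF t) :
      TyWF (.arr s T)

/-! Every well-formed type has a zero term `<_!!s>.[0_{!!t_i}].i`, built from pops, pushes and a
choice, or, when the sum is empty, the loop `(0_{!!s => !!s.⋆})^⋆`. Since the zero terms of the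
pushed types are needed in the context extended by the popped ones, inhabitation is proved
uniformly in the context. -/

/-- `memOf [(a₁, r₁), …, (aₙ, rₙ)]` is the memory type `a₁(r₁)⋯aₙ(rₙ)`. -/
def memOf (L : List (Loc × Ty Loc Ch)) : MemTy Loc Ch :=
  L.foldr (fun p m => memCons p.1 p.2 m) memNil

omit [DecidableEq Ch] in
theorem memOf_map_append (a : Loc) (l : List (Ty Loc Ch)) (L : List (Loc × Ty Loc Ch)) :
    memOf (l.map (a, ·) ++ L) = Function.update (memOf L) a (l ++ memOf L a) := by
  induction l with
  | nil => simp [memOf]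
  | cons r l ih =>
    simp only [memOf, List.map_cons, List.cons_append, List.foldr_cons] at ih ⊢
    rw [ih]
    simp [memCons]

omit [DecidableEq Ch] in
theorem exists_memOf_eq (s : MemTy Loc Ch) (hs : {a | s a ≠ []}.Finite) :
    ∃ L : List (Loc × Ty Loc Ch), memOf L = s ∧ ∀ p ∈ L, p.2 ∈ s p.1 := by
  obtain ⟨as, has⟩ : ∃ as : List Loc, ∀ a, s a ≠ [] → a ∈ as :=
    ⟨hs.toFinset.toList, fun a ha => by simpa using ha⟩
  clear hs
  induction as generalizing s with
  | nil =>
    refine ⟨[], funext fun a => ?_, by simp⟩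
    by_contra h
    exact List.not_mem_nil (has a (Ne.symm h))
  | cons a as ih =>
    have has' : ∀ b, Function.update s a [] b ≠ [] → b ∈ as := by
      intro b hb
      rcases eq_or_ne b a with rfl | hba
      · simp at hb
      · rw [Function.update_of_ne hba] at hb
        exact (List.mem_cons.mp (has b hb)).resolve_left hba
    obtain ⟨L, hL, hmem⟩ := ih _ has'
    refine ⟨(s a).map (a, ·) ++ L, ?_, ?_⟩
    · rw [memOf_map_append, hL]
      simp
    · simp only [List.mem_append, List.mem_map]
      rintro p (⟨r, hr, rfl⟩ | hp)
      · exact hr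
      · have hp' := hmem p hp
        rcases eq_or_ne p.1 a with hpa | hpa
        · simp [hpa] at hp'
        · rwa [Function.update_of_ne hpa] at hp'

def Ty.IsInhabited (t : Ty Loc Ch) : Prop :=
  ∀ Γ : List (Ty Loc Ch), ∃ M, Typing Γ M t

namespace Ty.IsInhabited

theorem arr_memOf {T : SumTy Loc Ch} (h : (arr memNil T).IsInhabited) :
    ∀ L : List (Loc × Ty Loc Ch), (arr (memOf L) T).IsInhabited
  | [] => h
  | p :: L => fun Γ =>
    have ⟨M, hM⟩ := arr_memOf h L (p.2 :: Γ)
    ⟨.pop p.1 M, .pop Γ p.2 p.1 M (memOf L) T hM⟩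

theorem of_arr_memOf {T : SumTy Loc Ch} :
    ∀ L : List (Loc × Ty Loc Ch), (∀ p ∈ L, p.2.IsInhabited) →
      (arr (memOf L) T).IsInhabited → (arr memNil T).IsInhabited
  | [], _, h => h
  | p :: L, hL, h => of_arr_memOf L (fun q hq => hL q (.tail _ hq)) fun Γ =>
    have ⟨N, hN⟩ := hL p (.head _) Γ
    have ⟨M, hM⟩ := h Γ
    ⟨.push N p.1 M, .push Γ N p.2 p.1 M (memOf L) T hN hM⟩

end Ty.IsInhabited

/-- The choice `i` selects the summand `m` of `T`: expand `ε => ε.i` to `m => m.i`, then include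
the other summands. -/
theorem typing_choice_of_eq_some (Γ : List (Ty Loc Ch)) {i : Ch} {m : MemTy Loc Ch}
    {T : SumTy Loc Ch} (hTi : T i = some m) : Typing Γ (.choice i) (.arr m T) := by
  have hexp : sumExpand m (sumSingle i memNil) = sumSingle i m := by
    funext j
    by_cases h : j = i
    · simp only [sumExpand, sumSingle, h, if_true, Option.map_some]
      rfl
    · simp [sumExpand, sumSingle, h]
  have hdisj : ∀ j, sumSingle i m j = none ∨ Function.update T i none j = none := by
    intro j
    rcases eq_or_ne j i with rfl | h
    · simp
    · simp [sumSingle, h]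
  have hover : sumOver (sumSingle i m) (Function.update T i none) = T := by
    funext j
    by_cases h : j = i
    · subst h; simp [sumOver, sumSingle, hTi]
    · simp [sumOver, sumSingle, h]
  have hsingle := Typing.expand Γ _ memNil m _ (Typing.choice Γ i)
  rw [hexp] at hsingle
  simpa only [hover] using Typing.incl Γ _ m _ _ hdisj hsingle

theorem isInhabited_arr_of_eq_some {s m : MemTy Loc Ch} {T : SumTy Loc Ch} {i : Ch}
    (hTi : T i = some m) (hs : {a | s a ≠ []}.Finite) (hm : {a | m a ≠ []}.Finite)
    (hinh : ∀ a, ∀ r ∈ m a, r.IsInhabited) : (Ty.arr s T).IsInhabited := by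
  obtain ⟨Ls, rfl, -⟩ := exists_memOf_eq s hs
  obtain ⟨Lm, rfl, hLm⟩ := exists_memOf_eq m hm
  refine Ty.IsInhabited.arr_memOf (.of_arr_memOf Lm (fun p hp => hinh _ _ (hLm p hp)) ?_) Ls
  exact fun Γ => ⟨_, typing_choice_of_eq_some Γ hTi⟩

/-- With no summand to return to, loop on `s => s.i` for an arbitrary choice `i`. -/
theorem isInhabited_arr_of_forall_eq_none [Nonempty Ch] {s : MemTy Loc Ch} {T : SumTy Loc Ch}
    (hT : ∀ i, T i = none) (hs : {a | s a ≠ []}.Finite) (hinh : ∀ a, ∀ r ∈ s a, r.IsInhabited) :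
    (Ty.arr s T).IsInhabited := fun Γ =>
  let i := Classical.arbitrary Ch
  have ⟨M, hM⟩ := isInhabited_arr_of_eq_some (Function.update_self i (some s) T) hs hs hinh Γ
  ⟨.loop M i, .loop Γ M i s T (hT i) hM⟩

theorem TyWF.isInhabited [Nonempty Ch] {t : Ty Loc Ch} (h : TyWF t) : t.IsInhabited := by
  induction h with
  | arr s T hs _ _ hT _ ihs ihT =>
    by_cases hI : ∃ i m, T i = some m
    · obtain ⟨i, m, hm⟩ := hI
      exact isInhabited_arr_of_eq_some hm hs (hT i m hm) (ihT i m hm)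
    · refine isInhabited_arr_of_forall_eq_none (fun i => ?_) hs ihs
      exact Option.eq_none_iff_forall_ne_some.mpr fun m hm => hI ⟨i, m, hm⟩

/-- Type inhabitation: every type of the FMC with control is inhabited by a
closed term (the zero term) in the empty context. -/
theorem type_inhabitation [Nonempty Ch] (t : Ty Loc Ch) (h : TyWF t) :
    ∃ M : Tm Loc Ch, Typing [] M t :=
  h.isInhabited []
end

section
/- Typed terms are runnable: if Γ ⊢ M : t, where M is loop-free and every sum type occurring in the derivation is indexed by a nonempty finite set of choices, then for every substitution map σ ∈ ⟦Γ⟧ the term σM belongs to the runnable set ⟦t⟧. In particular, for every closed loop-free term ⊢ M : !!s => !!t_I with nonempty sum types, and every memory S_A ∈ ⟦!!s⟧, there exist i ∈ I and T_A ∈ ⟦!!t_i⟧ with (S_A, M) ⇓ (T_A, i). -/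
variable {Loc Ch : Type}

/-- A term is loop-free if it contains no subterm of the form `M^i`. -/
def Tm.loopFree : Tm Loc Ch → Prop
  | .var _ => True
  | .push N _ M => N.loopFree ∧ M.loopFree
  | .pop _ M => M.loopFree
  | .choice _ => True
  | .caseOf M _ N => M.loopFree ∧ N.loopFree
  | .loop _ _ => False

variable [DecidableEq Loc]

/-- Big-step evaluation `(S, M) ⇓ (T, i)`. -/
inductive Eval : Mem Loc Ch → Tm Loc Ch → Mem Loc Ch → Ch → Prop where
  | choice (S : Mem Loc Ch) (i : Ch) : Eval S (.choice i) S i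
  | push (S : Mem Loc Ch) (N : Tm Loc Ch) (a : Loc) (M : Tm Loc Ch) (T : Mem Loc Ch) (i : Ch) :
      Eval (S.push a N) M T i → Eval S (.push N a M) T i
  | pop (S : Mem Loc Ch) (a : Loc) (N M : Tm Loc Ch) (T : Mem Loc Ch) (i : Ch) :
      Eval S (M.subst 0 N) T i → Eval (S.push a N) (.pop a M) T i
  | case_eq (R S T : Mem Loc Ch) (M N : Tm Loc Ch) (i j : Ch) :
      Eval R M S i → Eval S N T j → Eval R (.caseOf M i N) T j
  | case_ne (R T : Mem Loc Ch) (M N : Tm Loc Ch) (i j : Ch) (h : i ≠ j) :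
      Eval R M T i → Eval R (.caseOf M j N) T i
  | loop_eq (R S T : Mem Loc Ch) (M : Tm Loc Ch) (i j : Ch) :
      Eval R M S i → Eval S (.loop M i) T j → Eval R (.loop M i) T j
  | loop_ne (R T : Mem Loc Ch) (M : Tm Loc Ch) (i j : Ch) (h : i ≠ j) :
      Eval R M T i → Eval R (.loop M j) T i

variable [DecidableEq Loc] [DecidableEq Ch]

/-- A type is OK if it conforms to the grammar (all memory types and sum
types are finitely supported) and is zero-free (every sum type occurring in
it is indexed by a nonempty set of choices). -/
inductive TyOK : Ty Loc Ch → Prop where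
  | arr (s : MemTy Loc Ch) (T : SumTy Loc Ch)
      (hs1 : {a | s a ≠ []}.Finite)
      (hs2 : ∀ a, ∀ t ∈ s a, TyOK t)
      (hT0 : ∃ i, T i ≠ none)
      (hT1 : {i | T i ≠ none}.Finite)
      (hT2 : ∀ i m, T i = some m → {a | m a ≠ []}.Finite)
      (hT3 : ∀ i m, T i = some m → ∀ a, ∀ t ∈ m a, TyOK t) :
      TyOK (.arr s T)

/-- The typing judgement `Γ ⊢ M : t` restricted so that every type occurring
in the derivation is OK (in particular, every sum type occurring in the
derivation is indexed by a nonempty finite set of choices). -/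
inductive TypingOK : List (Ty Loc Ch) → Tm Loc Ch → Ty Loc Ch → Prop where
  | var (Γ : List (Ty Loc Ch)) (n : ℕ) (t : Ty Loc Ch) (h : Γ[n]? = some t)
      (hok : TyOK t) :
      TypingOK Γ (.var n) t
  | choice (Γ : List (Ty Loc Ch)) (i : Ch)
      (hok : TyOK (Ty.arr memNil (sumSingle i memNil) : Ty Loc Ch)) :
      TypingOK Γ (.choice i) (.arr memNil (sumSingle i memNil))
  | push (Γ : List (Ty Loc Ch)) (N : Tm Loc Ch) (r : Ty Loc Ch) (a : Loc)
      (M : Tm Loc Ch) (s : MemTy Loc Ch) (T : SumTy Loc Ch)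
      (hok : TyOK (Ty.arr s T)) :
      TypingOK Γ N r → TypingOK Γ M (.arr (memCons a r s) T) →
      TypingOK Γ (.push N a M) (.arr s T)
  | pop (Γ : List (Ty Loc Ch)) (r : Ty Loc Ch) (a : Loc) (M : Tm Loc Ch)
      (s : MemTy Loc Ch) (T : SumTy Loc Ch)
      (hok : TyOK (Ty.arr (memCons a r s) T)) :
      TypingOK (r :: Γ) M (.arr s T) →
      TypingOK Γ (.pop a M) (.arr (memCons a r s) T)
  | caseOf (Γ : List (Ty Loc Ch)) (M N : Tm Loc Ch) (i : Ch)
      (r s : MemTy Loc Ch) (T : SumTy Loc Ch)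
      (hok : TyOK (Ty.arr r T)) :
      TypingOK Γ M (.arr r (Function.update T i (some s))) →
      TypingOK Γ N (.arr s T) →
      TypingOK Γ (.caseOf M i N) (.arr r T)
  | loop (Γ : List (Ty Loc Ch)) (M : Tm Loc Ch) (i : Ch)
      (s : MemTy Loc Ch) (T : SumTy Loc Ch) (h : T i = none)
      (hok : TyOK (Ty.arr s T)) :
      TypingOK Γ M (.arr s (Function.update T i (some s))) →
      TypingOK Γ (.loop M i) (.arr s T)
  | expand (Γ : List (Ty Loc Ch)) (M : Tm Loc Ch)
      (r s : MemTy Loc Ch) (T : SumTy Loc Ch)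
      (hok : TyOK (Ty.arr (memApp r s) (sumExpand s T))) :
      TypingOK Γ M (.arr r T) →
      TypingOK Γ M (.arr (memApp r s) (sumExpand s T))
  | incl (Γ : List (Ty Loc Ch)) (M : Tm Loc Ch) (r : MemTy Loc Ch)
      (T U : SumTy Loc Ch) (h : ∀ i, T i = none ∨ U i = none)
      (hok : TyOK (Ty.arr r (sumOver T U))) :
      TypingOK Γ M (.arr r T) →
      TypingOK Γ M (.arr r (sumOver T U))

/-- The graph of the runnable-set interpretation of types: `RunSet t R` holds
when `R` is the set `⟦t⟧` of runnable terms for the type `t`, defined by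
recursion on types via an interpretation `F` of the component types. -/
inductive RunSet : Ty Loc Ch → Set (Tm Loc Ch) → Prop where
  | arr (s : MemTy Loc Ch) (T : SumTy Loc Ch) (F : Ty Loc Ch → Set (Tm Loc Ch))
      (hs : ∀ a, ∀ t ∈ s a, RunSet t (F t))
      (hT : ∀ i m, T i = some m → ∀ a, ∀ t ∈ m a, RunSet t (F t)) :
      RunSet (.arr s T)
        { M | ∀ S : Mem Loc Ch,
            (∀ a, List.Forall₂ (fun N t => N ∈ F t) (S a) (s a)) →
            ∃ (i : Ch) (m : MemTy Loc Ch) (U : Mem Loc Ch), T i = some m ∧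
              (∀ a, List.Forall₂ (fun N t => N ∈ F t) (U a) (m a)) ∧ Eval S M U i }

/-- Lift a simultaneous substitution under a binder. -/
def liftSub (σ : ℕ → Tm Loc Ch) : ℕ → Tm Loc Ch
  | 0 => .var 0
  | n + 1 => (σ n).lift 0

/-- Simultaneous capture-avoiding substitution of a substitution map. -/
def Tm.msubst : Tm Loc Ch → (ℕ → Tm Loc Ch) → Tm Loc Ch
  | .var n, σ => σ n
  | .push N a M, σ => .push (N.msubst σ) a (M.msubst σ)
  | .pop a M, σ => .pop a (M.msubst (liftSub σ))
  | .choice i, _ => .choice i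
  | .caseOf M i N, σ => .caseOf (M.msubst σ) i (N.msubst σ)
  | .loop M i, σ => .loop (M.msubst σ) i

/-!
The proof is by logical relations. Read each type `t` as its runnable set `runSet t`, and the
arrow `!!s => !!t_I` as the set `arrSet runSet s T` of terms that run from every memory of
type `!!s` to a memory of one of the types `!!t_i`. Every typing rule except the loop rule is
sound for this reading: push and pop move a runnable term between the memory and the
substitution map, case composes two runs, inclusion only enlarges the set of outcomes, and
expansion holds because evaluation leaves the part of the memory below what it reads untouched.
Induction on the derivation then gives the theorem. In the pop case, instantiating the bound
variable of `σ(a<x>.M)` by `N` must give `M` under `σ` extended by `N`, which is the usual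
substitution algebra for de Bruijn terms.
-/

theorem List.forall₂_congr_of_mem {α β : Type*} {R S : α → β → Prop} {l₁ : List α}
    {l₂ : List β} (h : ∀ a, ∀ b ∈ l₂, R a b ↔ S a b) :
    List.Forall₂ R l₁ l₂ ↔ List.Forall₂ S l₁ l₂ := by
  induction l₂ generalizing l₁ with
  | nil => simp
  | cons b l₂ ih =>
    simp only [List.forall₂_cons_right_iff, h _ b List.mem_cons_self,
      ih fun a b' hb' => h a b' (List.mem_cons_of_mem b hb')]

section

-- Rebinding `Loc` and `Ch` keeps the instance variables above out of the lemmas below.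
variable {Loc Ch : Type}

def liftRen (f : ℕ → ℕ) : ℕ → ℕ
  | 0 => 0
  | n + 1 => f n + 1

def Tm.rename : Tm Loc Ch → (ℕ → ℕ) → Tm Loc Ch
  | .var n, f => .var (f n)
  | .push N a M, f => .push (N.rename f) a (M.rename f)
  | .pop a M, f => .pop a (M.rename (liftRen f))
  | .choice i, _ => .choice i
  | .caseOf M i N, f => .caseOf (M.rename f) i (N.rename f)
  | .loop M i, f => .loop (M.rename f) i

def consSub (N : Tm Loc Ch) (σ : ℕ → Tm Loc Ch) : ℕ → Tm Loc Ch
  | 0 => N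
  | n + 1 => σ n

namespace Tm

lemma lift_eq_rename (M : Tm Loc Ch) (d : ℕ) :
    M.lift d = M.rename fun n => if n < d then n else n + 1 := by
  induction M generalizing d with
  | var n => simp only [lift, rename]; split_ifs <;> rfl
  | pop a M ih =>
    simp only [lift, rename, ih]
    congr 3 with (_ | n)
    · simp [liftRen]
    · simp only [liftRen]; split_ifs <;> omega
  | _ => simp_all [lift, rename]

lemma lift_zero_eq_rename (M : Tm Loc Ch) : M.lift 0 = M.rename Nat.succ := by
  simp [lift_eq_rename]

lemma rename_rename (M : Tm Loc Ch) (f g : ℕ → ℕ) :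
    (M.rename f).rename g = M.rename (g ∘ f) := by
  induction M generalizing f g with
  | pop a M ih =>
    simp only [rename, ih]
    congr 3 with n
    cases n <;> simp [liftRen]
  | _ => simp_all [rename]

lemma rename_msubst (M : Tm Loc Ch) (f : ℕ → ℕ) (σ : ℕ → Tm Loc Ch) :
    (M.rename f).msubst σ = M.msubst (σ ∘ f) := by
  induction M generalizing f σ with
  | pop a M ih =>
    simp only [rename, msubst, ih]
    congr 3 with n
    cases n <;> simp [liftRen, liftSub]
  | _ => simp_all [rename, msubst]

lemma msubst_rename (M : Tm Loc Ch) (σ : ℕ → Tm Loc Ch) (f : ℕ → ℕ) :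
    (M.msubst σ).rename f = M.msubst fun n => (σ n).rename f := by
  induction M generalizing σ f with
  | pop a M ih =>
    simp only [rename, msubst, ih]
    congr 3 with (_ | n)
    · rfl
    · simp only [liftSub, lift_zero_eq_rename, rename_rename]
      rfl
  | _ => simp_all [rename, msubst]

lemma msubst_msubst (M : Tm Loc Ch) (σ τ : ℕ → Tm Loc Ch) :
    (M.msubst σ).msubst τ = M.msubst fun n => (σ n).msubst τ := by
  induction M generalizing σ τ with
  | pop a M ih =>
    simp only [msubst, ih]
    congr 3 with (_ | n)
    · rfl
    · simp only [liftSub, lift_zero_eq_rename, rename_msubst, msubst_rename]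
      congr 1 with m
      exact lift_zero_eq_rename (τ m)
  | _ => simp_all [msubst]

lemma msubst_var (M : Tm Loc Ch) : M.msubst .var = M := by
  induction M with
  | pop a M ih =>
    have : liftSub (.var : ℕ → Tm Loc Ch) = .var := by
      funext n; cases n <;> simp [liftSub, lift]
    simp [msubst, this, ih]
  | _ => simp_all [msubst]

lemma subst_eq_msubst (M : Tm Loc Ch) (k : ℕ) (N : Tm Loc Ch) :
    M.subst k N =
      M.msubst fun n => if n = k then N else if n < k then .var n else .var (n - 1) := by
  induction M generalizing k N with
  | var n => rfl
  | pop a M ih =>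
    simp only [subst, msubst, ih]
    congr 3 with (_ | n)
    · simp [liftSub]
    · rcases lt_trichotomy n k with h | rfl | h
      · simp [liftSub, lift, h, h.ne]
      · simp [liftSub]
      · simp [liftSub, lift, h.ne', h.not_gt]
        omega
  | _ => simp_all [subst, msubst]

lemma subst_zero_msubst_liftSub (M N : Tm Loc Ch) (σ : ℕ → Tm Loc Ch) :
    (M.msubst (liftSub σ)).subst 0 N = M.msubst (consSub N σ) := by
  rw [subst_eq_msubst, msubst_msubst]
  congr 1 with (_ | n)
  · rfl
  · simp only [liftSub, consSub, lift_zero_eq_rename, rename_msubst]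
    convert msubst_var (σ n) using 2
    funext m
    simp

end Tm

def MemMatches (F : Ty Loc Ch → Set (Tm Loc Ch)) (S : Mem Loc Ch) (m : MemTy Loc Ch) : Prop :=
  ∀ a, List.Forall₂ (fun N t => N ∈ F t) (S a) (m a)

theorem memMatches_congr {F G : Ty Loc Ch → Set (Tm Loc Ch)} {S : Mem Loc Ch} {m : MemTy Loc Ch}
    (h : ∀ a, ∀ t ∈ m a, F t = G t) :
    MemMatches F S m ↔ MemMatches G S m :=
  forall_congr' fun a => List.forall₂_congr_of_mem fun N t ht => by rw [h a t ht]

end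

section

variable {Loc Ch : Type} [DecidableEq Loc]

theorem Eval.frame {S U : Mem Loc Ch} {M : Tm Loc Ch} {i : Ch}
    (E : Mem Loc Ch) (h : Eval S M U i) :
    Eval (fun a => S a ++ E a) M (fun a => U a ++ E a) i := by
  have push_append (S : Loc → List (Tm Loc Ch)) (a : Loc) (N : Tm Loc Ch) :
      (fun b => Mem.push S a N b ++ E b) = Mem.push (fun b => S b ++ E b) a N := by
    funext b
    simp only [Mem.push, Function.update_apply]
    split_ifs with hb <;> simp [hb]
  induction h with
  | choice S i => exact .choice _ _
  | push S N a M T i _ ih => exact .push _ _ _ _ _ _ (push_append S a N ▸ ih)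
  | pop S a N M T i _ ih => exact push_append S a N ▸ .pop _ _ _ _ _ _ ih
  | case_eq R S T M N i j _ _ ih₁ ih₂ => exact .case_eq _ _ _ _ _ _ _ ih₁ ih₂
  | case_ne R T M N i j hne _ ih => exact .case_ne _ _ _ _ _ _ hne ih
  | loop_eq R S T M i j _ _ ih₁ ih₂ => exact .loop_eq _ _ _ _ _ _ ih₁ ih₂
  | loop_ne R T M i j hne _ ih => exact .loop_ne _ _ _ _ _ hne ih

-- The set in the conclusion of `RunSet.arr`, as a function of the interpretation `F`.
def arrSet (F : Ty Loc Ch → Set (Tm Loc Ch)) (s : MemTy Loc Ch) (T : SumTy Loc Ch) :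
    Set (Tm Loc Ch) :=
  {M | ∀ S, MemMatches F S s →
    ∃ (i : Ch) (m : MemTy Loc Ch) (U : Mem Loc Ch),
      T i = some m ∧ MemMatches F U m ∧ Eval S M U i}

def runSet (t : Ty Loc Ch) : Set (Tm Loc Ch) := {N | ∃ R, RunSet t R ∧ N ∈ R}

variable {F G : Ty Loc Ch → Set (Tm Loc Ch)}

theorem arrSet_congr {s : MemTy Loc Ch} {T : SumTy Loc Ch} (hs : ∀ a, ∀ t ∈ s a, F t = G t)
    (hT : ∀ i m, T i = some m → ∀ a, ∀ t ∈ m a, F t = G t) :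
    arrSet F s T = arrSet G s T :=
  Set.ext fun _ => forall_congr' fun _ => imp_congr (memMatches_congr hs) <|
    exists_congr fun i => exists_congr fun m => exists_congr fun _ =>
      and_congr_right fun hi => and_congr_left' (memMatches_congr (hT i m hi))

theorem RunSet.unique {t : Ty Loc Ch} {R R' : Set (Tm Loc Ch)} (h : RunSet t R)
    (h' : RunSet t R') : R = R' := by
  induction h generalizing R' with
  | arr s T F hs hT ihs ihT =>
    cases h' with
    | arr _ _ F' hs' hT' =>
      exact arrSet_congr (fun a t ht => ihs a t ht (hs' a t ht))
        (fun i m hi a t ht => ihT i m hi a t ht (hT' i m hi a t ht))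

theorem RunSet.eq_runSet {t : Ty Loc Ch} {R : Set (Tm Loc Ch)} (h : RunSet t R) :
    R = runSet t :=
  Set.ext fun _ => ⟨fun hN => ⟨R, h, hN⟩, fun ⟨_, h', hN⟩ => h.unique h' ▸ hN⟩

theorem RunSet.eq_arrSet {s : MemTy Loc Ch} {T : SumTy Loc Ch} {R : Set (Tm Loc Ch)}
    (h : RunSet (.arr s T) R) : R = arrSet runSet s T := by
  cases h with
  | arr _ _ F hs hT =>
    exact arrSet_congr (fun a t ht => (hs a t ht).eq_runSet)
      (fun i m hi a t ht => (hT i m hi a t ht).eq_runSet)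

theorem TyOK.exists_runSet {t : Ty Loc Ch} (h : TyOK t) : ∃ R, RunSet t R := by
  induction h with
  | arr s T _ _ _ _ _ _ ihs ihT =>
    classical
    refine ⟨_, .arr s T (fun t => if h : ∃ R, RunSet t R then h.choose else ∅) ?_ ?_⟩
    · intro a t ht
      simpa [dif_pos (ihs a t ht)] using (ihs a t ht).choose_spec
    · intro i m hi a t ht
      simpa [dif_pos (ihT i m hi a t ht)] using (ihT i m hi a t ht).choose_spec

theorem runSet_arr_subset (s : MemTy Loc Ch) (T : SumTy Loc Ch) :
    runSet (.arr s T) ⊆ arrSet runSet s T :=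
  fun _ ⟨_, h, hM⟩ => h.eq_arrSet ▸ hM

theorem TyOK.runSet_arr {s : MemTy Loc Ch} {T : SumTy Loc Ch} (hok : TyOK (.arr s T)) :
    runSet (.arr s T) = arrSet runSet s T :=
  let ⟨_, h⟩ := hok.exists_runSet
  h.eq_runSet ▸ h.eq_arrSet

-- `S` is a plain function rather than a `Mem`, so that the `Function.update` lemmas apply to it.
theorem memMatches_push_memCons_iff {S : Loc → List (Tm Loc Ch)} {a : Loc} {N : Tm Loc Ch}
    {r : Ty Loc Ch} {s : MemTy Loc Ch} :
    MemMatches F (Mem.push S a N) (memCons a r s) ↔ N ∈ F r ∧ MemMatches F S s := by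
  constructor
  · intro h
    have ha : List.Forall₂ (fun N t => N ∈ F t) (N :: S a) (r :: s a) := by
      simpa [Mem.push, memCons] using h a
    rw [List.forall₂_cons] at ha
    refine ⟨ha.1, fun b => ?_⟩
    by_cases hb : b = a
    · exact hb ▸ ha.2
    · simpa [Mem.push, memCons, hb] using h b
  · rintro ⟨hN, hS⟩ b
    by_cases hb : b = a
    · subst hb
      simpa [Mem.push, memCons] using List.Forall₂.cons (R := fun N t => N ∈ F t) hN (hS b)
    · simpa [Mem.push, memCons, hb] using hS b

theorem MemMatches.exists_eq_push {S : Mem Loc Ch} {a : Loc} {r : Ty Loc Ch} {s : MemTy Loc Ch}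
    (h : MemMatches F S (memCons a r s)) : ∃ N S', S = Mem.push S' a N := by
  have ha : List.Forall₂ (fun N t => N ∈ F t) (S a) (r :: s a) := by simpa [memCons] using h a
  obtain ⟨N, L, -, -, hSa⟩ := List.forall₂_cons_right_iff.mp ha
  refine ⟨N, fun b => if b = a then L else S b, funext fun b => ?_⟩
  by_cases hb : b = a <;> simp [Mem.push, hb, hSa]

theorem choice_mem_arrSet (F : Ty Loc Ch → Set (Tm Loc Ch)) [DecidableEq Ch] (i : Ch) :
    Tm.choice i ∈ arrSet F memNil (sumSingle i memNil) :=
  fun S hS => ⟨i, memNil, S, by simp [sumSingle], hS, .choice S i⟩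

theorem push_mem_arrSet {N M : Tm Loc Ch} {a : Loc} {r : Ty Loc Ch} {s : MemTy Loc Ch}
    {T : SumTy Loc Ch} (hN : N ∈ F r) (hM : M ∈ arrSet F (memCons a r s) T) :
    Tm.push N a M ∈ arrSet F s T := fun S hS =>
  let ⟨i, m, U, hi, hU, hev⟩ := hM (S.push a N) (memMatches_push_memCons_iff.2 ⟨hN, hS⟩)
  ⟨i, m, U, hi, hU, .push _ _ _ _ _ _ hev⟩

theorem pop_mem_arrSet {M : Tm Loc Ch} {a : Loc} {r : Ty Loc Ch} {s : MemTy Loc Ch}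
    {T : SumTy Loc Ch} (hM : ∀ N ∈ F r, M.subst 0 N ∈ arrSet F s T) :
    Tm.pop a M ∈ arrSet F (memCons a r s) T := by
  intro S hS
  obtain ⟨N, S', rfl⟩ := hS.exists_eq_push
  obtain ⟨hN, hS'⟩ := memMatches_push_memCons_iff.1 hS
  obtain ⟨i, m, U, hi, hU, hev⟩ := hM N hN S' hS'
  exact ⟨i, m, U, hi, hU, .pop _ _ _ _ _ _ hev⟩

theorem caseOf_mem_arrSet [DecidableEq Ch] {M N : Tm Loc Ch} {i : Ch} {r s : MemTy Loc Ch}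
    {T : SumTy Loc Ch} (hM : M ∈ arrSet F r (Function.update T i (some s)))
    (hN : N ∈ arrSet F s T) : Tm.caseOf M i N ∈ arrSet F r T := by
  intro R hR
  obtain ⟨j, m, S, hj, hS, hevM⟩ := hM R hR
  by_cases hji : j = i
  · subst hji
    obtain rfl : s = m := by simpa using hj
    obtain ⟨k, m', U, hk, hU, hevN⟩ := hN S hS
    exact ⟨k, m', U, hk, hU, .case_eq _ _ _ _ _ _ _ hevM hevN⟩
  · rw [Function.update_of_ne hji] at hj
    exact ⟨j, m, S, hj, hS, .case_ne _ _ _ _ _ _ hji hevM⟩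

theorem mem_arrSet_memApp {M : Tm Loc Ch} {r s : MemTy Loc Ch} {T : SumTy Loc Ch}
    (hM : M ∈ arrSet F r T) : M ∈ arrSet F (memApp r s) (sumExpand s T) := by
  intro S hS
  let below : Mem Loc Ch := fun a => (S a).drop (r a).length
  have hbelow : MemMatches F below s := fun a => List.forall₂_drop_append _ _ _ (hS a)
  obtain ⟨i, m, U, hi, hU, hev⟩ :=
    hM (fun a => (S a).take (r a).length) fun a => List.forall₂_take_append _ _ _ (hS a)
  refine ⟨i, memApp m s, fun a => U a ++ below a, by simp [sumExpand, hi],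
    fun a => List.rel_append (hU a) (hbelow a), ?_⟩
  simpa only [below, List.take_append_drop] using hev.frame below

theorem mem_arrSet_sumOver {M : Tm Loc Ch} {r : MemTy Loc Ch} {T : SumTy Loc Ch}
    (U : SumTy Loc Ch) (hM : M ∈ arrSet F r T) : M ∈ arrSet F r (sumOver T U) := fun S hS =>
  let ⟨i, m, V, hi, hV, hev⟩ := hM S hS
  ⟨i, m, V, by simp [sumOver, hi], hV, hev⟩

theorem TypingOK.msubst_mem_runSet [DecidableEq Ch] {Γ : List (Ty Loc Ch)} {M : Tm Loc Ch}
    {t : Ty Loc Ch} (h : TypingOK Γ M t) (hlf : M.loopFree) {σ : ℕ → Tm Loc Ch}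
    (hσ : ∀ n s, Γ[n]? = some s → σ n ∈ runSet s) : M.msubst σ ∈ runSet t := by
  induction h generalizing σ with
  | var _ n t h => exact hσ n t h
  | choice _ i hok => rw [hok.runSet_arr]; exact choice_mem_arrSet _ i
  | push _ N r a M s T hok _ _ ihN ihM =>
    rw [hok.runSet_arr]
    exact push_mem_arrSet (ihN hlf.1 hσ) (runSet_arr_subset _ _ (ihM hlf.2 hσ))
  | pop _ r a M s T hok _ ih =>
    rw [hok.runSet_arr]
    refine pop_mem_arrSet fun N hN => ?_
    rw [Tm.subst_zero_msubst_liftSub]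
    refine runSet_arr_subset _ _ (ih hlf ?_)
    rintro (_ | n) t ht
    · obtain rfl : r = t := by simpa using ht
      exact hN
    · exact hσ n t ht
  | caseOf _ M N i r s T hok _ _ ihM ihN =>
    rw [hok.runSet_arr]
    exact caseOf_mem_arrSet (runSet_arr_subset _ _ (ihM hlf.1 hσ))
      (runSet_arr_subset _ _ (ihN hlf.2 hσ))
  | loop => exact hlf.elim
  | expand _ M r s T hok _ ih =>
    rw [hok.runSet_arr]
    exact mem_arrSet_memApp (runSet_arr_subset _ _ (ih hlf hσ))
  | incl _ M r T U _ hok _ ih =>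
    rw [hok.runSet_arr]
    exact mem_arrSet_sumOver U (runSet_arr_subset _ _ (ih hlf hσ))

end

/-- Typed terms are runnable: for a loop-free term typed with nonempty sum
types throughout the derivation, every substitution instance by runnable
terms is runnable; in particular, a closed such term evaluates from any
runnable input memory to a runnable output memory and a choice in the
index set. -/
theorem typed_terms_are_runnable (Loc Ch : Type) [DecidableEq Loc] [DecidableEq Ch] :
    (∀ (Γ : List (Ty Loc Ch)) (M : Tm Loc Ch) (t : Ty Loc Ch) (σ : ℕ → Tm Loc Ch),
      TypingOK Γ M t → M.loopFree →
      (∀ (n : ℕ) (s : Ty Loc Ch), Γ[n]? = some s → ∃ R, RunSet s R ∧ σ n ∈ R) →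
      ∃ R, RunSet t R ∧ M.msubst σ ∈ R) ∧
    (∀ (M : Tm Loc Ch) (s : MemTy Loc Ch) (T : SumTy Loc Ch),
      TypingOK [] M (.arr s T) → M.loopFree →
      ∀ S : Mem Loc Ch,
        (∀ a, List.Forall₂ (fun (N : Tm Loc Ch) (t : Ty Loc Ch) => ∃ R, RunSet t R ∧ N ∈ R) (S a) (s a)) →
        ∃ (i : Ch) (m : MemTy Loc Ch) (U : Mem Loc Ch), T i = some m ∧
          (∀ a, List.Forall₂ (fun (N : Tm Loc Ch) (t : Ty Loc Ch) => ∃ R, RunSet t R ∧ N ∈ R) (U a) (m a)) ∧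
          Eval S M U i) := by
  refine ⟨fun Γ M t σ h hlf hσ => h.msubst_mem_runSet hlf hσ, fun M s T h hlf => ?_⟩
  have hM := h.msubst_mem_runSet hlf (σ := .var) (by simp)
  rw [Tm.msubst_var] at hM
  exact runSet_arr_subset s T hM
end
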